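/- arXiv:2002.02768 — 6 statements merged into one kernel-verified Lean document; each statement's English description precedes it below -/
import Mathlib

section
/- Let n, m be positive integers, let C ∈ M_n be a real diagonal matrix, and let A_1, …, A_m ∈ M_n be diagonal matrices. Then W_C(A_1, …, A_m) = conv{(tr(C P^t A_1 P), …, tr(C P^t A_m P)) : P ∈ M_n is a permutation matrix}; in particular W_C(A_1, …, A_m) is polyhedral. -/
open Matrix

/-- The joint `C`-numerical range of a tuple of matrices
`W_C(A_1, …, A_m) = {(tr(C U*A₁U), …, tr(C U*AₘU)) : U unitary} ⊆ ℂ^m`. -/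
noncomputable def jointCNumRange {n m : ℕ} (C : Matrix (Fin n) (Fin n) ℂ)
    (A : Fin m → Matrix (Fin n) (Fin n) ℂ) : Set (Fin m → ℂ) :=
  { p | ∃ U ∈ Matrix.unitaryGroup (Fin n) ℂ, ∀ j, p j = (C * (star U * A j * U)).trace }

/-- A subset of a real vector space is polyhedral if it is the convex hull of a finite set. -/
def IsPolyhedral {E : Type*} [AddCommGroup E] [Module ℝ E] (S : Set E) : Prop :=
  ∃ F : Set E, F.Finite ∧ S = convexHull ℝ F

/-!
For `C = diag c` and `A_j = diag d_j` one has `tr(C U* A_j U) = ∑_k w_k (d_j)_k` with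
`w = diag(U C U*) = |U|² c`, where `|U|² = (|U_ki|²)`. So `W_C(A)` is the image under a real-linear
map of the set of diagonals of the unitary orbit of `diag c`, and the permutation points are the
images of the rearrangements of `c`. That set of diagonals is the permutohedron `conv {c ∘ σ}`
(Schur–Horn for a diagonal matrix). It lies in the permutohedron by Birkhoff's theorem, since `|U|²`
is doubly stochastic. Conversely, a Givens rotation in the `(a, b)`-plane together with the
intermediate value theorem shows that the set of diagonals is closed under T-transforms, and
every point of the permutohedron is reached from `c` by finitely many T-transforms, each of which
makes one more coordinate agree with the target.
-/

open Finset

section Transfer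

variable {ι : Type*} [DecidableEq ι]

/-- Closure under the T-transforms (Robin Hood transfers) of majorization theory. -/
def IsTransferClosed (R : Set (ι → ℝ)) : Prop :=
  ∀ u ∈ R, ∀ a b, a ≠ b → ∀ t : ℝ, 0 ≤ t → t ≤ u a - u b →
    u + Pi.single b t - Pi.single a t ∈ R

variable {R : Set (ι → ℝ)}

theorem IsTransferClosed.comp_swap (hR : IsTransferClosed R) {u : ι → ℝ} (hu : u ∈ R)
    (a b : ι) : u ∘ Equiv.swap a b ∈ R := by
  rcases eq_or_ne a b with rfl | hab
  · simpa using hu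
  wlog h : u b ≤ u a generalizing a b
  · rw [Equiv.swap_comm]
    exact this b a hab.symm (le_of_not_ge h)
  convert hR u hu a b hab (u a - u b) (sub_nonneg.2 h) le_rfl using 1
  ext i
  rcases eq_or_ne i a with rfl | hia
  · simp [hab]
  rcases eq_or_ne i b with rfl | hib
  · simp [hab.symm]
  · simp [Equiv.swap_apply_of_ne_of_ne hia hib, hia, hib]

theorem IsTransferClosed.comp_perm [Finite ι] (hR : IsTransferClosed R) {u : ι → ℝ}
    (hu : u ∈ R) (σ : Equiv.Perm ι) : u ∘ σ ∈ R := by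
  induction σ using Equiv.Perm.swap_induction_on' with
  | one => exact hu
  | mul_swap σ a b _ ih => exact hR.comp_swap ih a b

theorem card_ne_lt_of_transfer [Fintype ι] {c v : ι → ℝ} {j k : ι} (hjk : j ≠ k)
    (hj : c j ≠ v j) (hk : c k ≠ v k) {δ : ℝ} (hδ : c j - δ = v j ∨ c k + δ = v k) :
    #{i | (c + Pi.single k δ - Pi.single j δ : ι → ℝ) i ≠ v i} < #{i | c i ≠ v i} := by
  have hother : ∀ i, i ≠ j → i ≠ k → (c + Pi.single k δ - Pi.single j δ : ι → ℝ) i = c i :=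
    fun i hij hik => by simp [hij, hik]
  refine card_lt_card ((ssubset_iff_of_subset fun i => ?_).2 ?_)
  · simp only [mem_filter, mem_univ, true_and]
    intro hi
    by_cases hij : i = j
    · exact hij ▸ hj
    by_cases hik : i = k
    · exact hik ▸ hk
    rwa [hother i hij hik] at hi
  · rcases hδ with hδ | hδ
    · exact ⟨j, by simpa using hj, by simp [hjk, hδ]⟩
    · exact ⟨k, by simpa using hk, by simp [hjk.symm, hδ]⟩

end Transfer

section Majorization

variable {ι : Type*} [LinearOrder ι] [LocallyFiniteOrderBot ι]

theorem sum_Iic_add_single_sub_single (c : ι → ℝ) (j k m : ι) (δ : ℝ) :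
    ∑ i ∈ Iic m, (c + Pi.single k δ - Pi.single j δ : ι → ℝ) i =
      ∑ i ∈ Iic m, c i + (if k ≤ m then δ else 0) - (if j ≤ m then δ else 0) := by
  simp [sum_add_distrib, sum_sub_distrib, sum_pi_single']

theorem sum_Iic_le_of_transfer {c v : ι → ℝ} {j k : ι} (hjk : j < k) {δ : ℝ}
    (hδ : δ ≤ c j - v j) (hbelow : ∀ i < k, v i ≤ c i)
    (hpre : ∀ m, ∑ i ∈ Iic m, v i ≤ ∑ i ∈ Iic m, c i) (m : ι) :
    ∑ i ∈ Iic m, v i ≤ ∑ i ∈ Iic m, (c + Pi.single k δ - Pi.single j δ : ι → ℝ) i := by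
  rw [sum_Iic_add_single_sub_single]
  by_cases hjm : j ≤ m
  · by_cases hkm : k ≤ m
    · simpa [hjm, hkm] using hpre m
    · have hterms : ∀ i ∈ Iic m, 0 ≤ c i - v i := fun i hi =>
        sub_nonneg.2 (hbelow i ((mem_Iic.1 hi).trans_lt (not_le.1 hkm)))
      have := single_le_sum hterms (mem_Iic.2 hjm)
      rw [sum_sub_distrib] at this
      simp only [hjm, hkm, if_true, if_false]
      linarith
  · have hkm : ¬ k ≤ m := fun h => hjm (hjk.le.trans h)
    simpa [hjm, hkm] using hpre m

variable [Fintype ι]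

theorem exists_lt_lt_of_sum_Iic_le {c v : ι → ℝ}
    (hpre : ∀ m, ∑ i ∈ Iic m, v i ≤ ∑ i ∈ Iic m, c i) (hsum : ∑ i, v i = ∑ i, c i)
    (hne : c ≠ v) :
    ∃ j k, j < k ∧ v j < c j ∧ c k < v k ∧ ∀ i < k, v i ≤ c i := by
  have hdeficit : ∃ k, c k < v k := by
    by_contra! h
    exact hne (funext fun i => ((sum_eq_sum_iff_of_le fun i _ => h i).1 hsum i (mem_univ i)).symm)
  obtain ⟨k, hk⟩ := exists_minimal_of_wellFoundedLT _ hdeficit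
  have hbelow : ∀ i < k, v i ≤ c i := fun i hi => not_lt.1 (hk.not_prop_of_lt hi)
  have hsurplus : ∑ i ∈ Iio k, v i < ∑ i ∈ Iio k, c i := by
    have := hpre k
    rw [Iic_eq_cons_Iio, sum_cons, sum_cons] at this
    linarith [hk.prop]
  obtain ⟨j, hj, hvc⟩ := exists_lt_of_sum_lt hsurplus
  exact ⟨j, k, mem_Iio.1 hj, hvc, hk.prop, hbelow⟩

theorem IsTransferClosed.mem_of_sum_Iic_le {R : Set (ι → ℝ)} (hR : IsTransferClosed R)
    {v : ι → ℝ} (hv : Antitone v) {c : ι → ℝ} (hc : c ∈ R)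
    (hpre : ∀ m, ∑ i ∈ Iic m, v i ≤ ∑ i ∈ Iic m, c i) (hsum : ∑ i, v i = ∑ i, c i) :
    v ∈ R := by
  -- Induction on the number of coordinates where `c` and `v` differ: the transfer of
  -- `δ` from `j` to `k` makes `c` agree with `v` at `j` or at `k`.
  induction hn : #{i | c i ≠ v i} using Nat.strong_induction_on generalizing c with
  | _ n ih =>
  rcases eq_or_ne c v with rfl | hne
  · exact hc
  obtain ⟨j, k, hjk, hj, hk, hbelow⟩ := exists_lt_lt_of_sum_Iic_le hpre hsum hne
  set δ := min (c j - v j) (v k - c k)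
  have hδ : 0 ≤ δ := le_min (by linarith) (by linarith)
  have hδjk : δ ≤ c j - c k := by linarith [min_le_left (c j - v j) (v k - c k), hv hjk.le]
  have hfix : c j - δ = v j ∨ c k + δ = v k :=
    (min_choice (c j - v j) (v k - c k)).imp (fun h => by linarith) (fun h => by linarith)
  refine ih _ (hn ▸ card_ne_lt_of_transfer hjk.ne hj.ne' hk.ne hfix)
    (hR c hc j k hjk.ne δ hδ hδjk) (sum_Iic_le_of_transfer hjk (min_le_left _ _) hbelow hpre)
    ?_ rfl
  simp [sum_add_distrib, sum_sub_distrib, hsum]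

theorem Antitone.sum_Iic_comp_perm_le {g : ι → ℝ} (hg : Antitone g) (τ : Equiv.Perm ι)
    (m : ι) : ∑ i ∈ Iic m, g (τ i) ≤ ∑ i ∈ Iic m, g i := by
  have hind : Antitone fun i => if i ≤ m then (1 : ℝ) else 0 := fun i i' h => by
    by_cases hi' : i' ≤ m
    · simp [hi', h.trans hi']
    · simp only [hi', if_false]
      split_ifs <;> norm_num
  have := (hind.monovary hg).sum_smul_comp_perm_le_sum_smul (σ := τ)
  simpa only [ite_smul, one_smul, zero_smul, ← sum_filter, filter_ge_eq_Iic] using this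

end Majorization

theorem exists_antitone_comp_perm {n : ℕ} (g : Fin n → ℝ) :
    ∃ σ : Equiv.Perm (Fin n), Antitone (g ∘ σ) :=
  ⟨Tuple.sort (-g), fun _ _ hij => by simpa using Tuple.monotone_sort (-g) hij⟩

theorem IsTransferClosed.convexHull_range_comp_perm_subset {n : ℕ} {R : Set (Fin n → ℝ)}
    (hR : IsTransferClosed R) {c : Fin n → ℝ} (hc : c ∈ R) :
    convexHull ℝ (Set.range fun σ : Equiv.Perm (Fin n) => c ∘ σ) ⊆ R := by
  intro v hv
  obtain ⟨α, hα⟩ := exists_antitone_comp_perm v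
  obtain ⟨β, hβ⟩ := exists_antitone_comp_perm c
  have hsum : ∑ i, v i = ∑ i, c i := by
    refine convexHull_min ?_ (convex_hyperplane (f := fun w : Fin n → ℝ => ∑ i, w i)
      ⟨fun x y => sum_add_distrib, fun r x => by simp [mul_sum]⟩ _) hv
    rintro _ ⟨σ, rfl⟩
    exact Equiv.sum_comp σ c
  have hpre : ∀ m, ∑ i ∈ Iic m, v (α i) ≤ ∑ i ∈ Iic m, c (β i) := by
    intro m
    refine convexHull_min ?_ (convex_halfSpace_le
      (f := fun w : Fin n → ℝ => ∑ i ∈ Iic m, w (α i))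
      ⟨fun x y => sum_add_distrib, fun r x => by simp [mul_sum]⟩ _) hv
    rintro _ ⟨σ, rfl⟩
    simpa using hβ.sum_Iic_comp_perm_le (β⁻¹ * σ * α) m
  have hvα : v ∘ α ∈ R :=
    hR.mem_of_sum_Iic_le hα (hR.comp_perm hc β) hpre (by simpa [Equiv.sum_comp] using hsum)
  simpa [Function.comp_assoc] using hR.comp_perm hvα α⁻¹

section Givens

variable {ι : Type*} [DecidableEq ι]

noncomputable def givens (a b : ι) (θ : ℝ) : Matrix ι ι ℂ :=
  Matrix.of fun k =>
    if k = a then (Real.cos θ : ℂ) • Pi.single a 1 + (Real.sin θ : ℂ) • Pi.single b 1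
    else if k = b then -(Real.sin θ : ℂ) • Pi.single a 1 + (Real.cos θ : ℂ) • Pi.single b 1
    else Pi.single k 1

variable {a b : ι} (θ : ℝ)

theorem givens_apply_left :
    givens a b θ a = (Real.cos θ : ℂ) • Pi.single a 1 + (Real.sin θ : ℂ) • Pi.single b 1 :=
  if_pos rfl

theorem givens_apply_right (hab : a ≠ b) :
    givens a b θ b = -(Real.sin θ : ℂ) • Pi.single a 1 + (Real.cos θ : ℂ) • Pi.single b 1 :=
  (if_neg hab.symm).trans (if_pos rfl)

theorem givens_apply_of_ne {k : ι} (ha : k ≠ a) (hb : k ≠ b) :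
    givens a b θ k = Pi.single k 1 :=
  (if_neg ha).trans (if_neg hb)

theorem star_givens_apply (k : ι) : star (givens a b θ k) = givens a b θ k := by
  rcases eq_or_ne k a with rfl | ha
  · simp [givens_apply_left, star_add, star_smul, -Complex.ofReal_cos, -Complex.ofReal_sin]
  rcases eq_or_ne k b with rfl | hb
  · simp [givens_apply_right θ ha.symm, star_add, star_smul, -Complex.ofReal_cos,
      -Complex.ofReal_sin]
  · simp [givens_apply_of_ne θ ha hb]

variable [Fintype ι]

theorem givens_mem_unitaryGroup (hab : a ≠ b) : givens a b θ ∈ unitaryGroup ι ℂ := by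
  rw [mem_unitaryGroup_iff]
  ext k l
  change givens a b θ k ⬝ᵥ star (givens a b θ l) = (1 : Matrix ι ι ℂ) k l
  rw [star_givens_apply]
  have hcases : ∀ k, k = a ∨ k = b ∨ (k ≠ a ∧ k ≠ b) := fun k => by tauto
  rcases hcases k with rfl | rfl | ⟨hka, hkb⟩ <;> rcases hcases l with rfl | rfl | ⟨hla, hlb⟩ <;>
    simp_all [givens_apply_left, givens_apply_right, givens_apply_of_ne, one_apply,
      Pi.single_apply, eq_comm, mul_comm, ← sq, Complex.cos_sq_add_sin_sq,
      Complex.sin_sq_add_cos_sq]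

theorem givens_mul_mul_star_apply_self (M : Matrix ι ι ℂ) (k : ι) :
    (givens a b θ * M * star (givens a b θ)) k k = givens a b θ k ⬝ᵥ M *ᵥ givens a b θ k := by
  rw [mul_mul_apply]
  exact congrArg _ (congrArg _ (star_givens_apply θ k))

theorem re_givens_mul_mul_star_apply_left (M : Matrix ι ι ℂ) :
    ((givens a b θ * M * star (givens a b θ)) a a).re = Real.cos θ ^ 2 * (M a a).re +
      Real.sin θ ^ 2 * (M b b).re + Real.cos θ * Real.sin θ * (M a b + M b a).re := by
  rw [givens_mul_mul_star_apply_self, givens_apply_left]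
  simp only [Complex.coe_smul, mulVec_add, mulVec_smul, mulVec_single, MulOpposite.op_one,
    one_smul, dotProduct_add, dotProduct_smul, add_dotProduct, smul_dotProduct, single_dotProduct,
    col_apply, one_mul, Complex.real_smul, smul_add, Complex.add_re, Complex.mul_re,
    Complex.ofReal_re, Complex.ofReal_im, zero_mul, sub_zero, Complex.mul_im, add_zero]
  ring

theorem re_givens_mul_mul_star_apply_right (M : Matrix ι ι ℂ) (hab : a ≠ b) :
    ((givens a b θ * M * star (givens a b θ)) b b).re = Real.sin θ ^ 2 * (M a a).re +
      Real.cos θ ^ 2 * (M b b).re - Real.cos θ * Real.sin θ * (M a b + M b a).re := by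
  rw [givens_mul_mul_star_apply_self, givens_apply_right θ hab]
  simp only [neg_smul, Complex.coe_smul, mulVec_add, mulVec_neg, mulVec_smul, mulVec_single,
    MulOpposite.op_one, one_smul, dotProduct_add, dotProduct_neg, dotProduct_smul, add_dotProduct,
    neg_dotProduct, smul_dotProduct, single_dotProduct, col_apply, one_mul, Complex.real_smul,
    smul_add, smul_neg, neg_add_rev, neg_neg, Complex.add_re, Complex.neg_re, Complex.mul_re,
    Complex.ofReal_re, Complex.ofReal_im, zero_mul, sub_zero, Complex.mul_im, add_zero]
  ring

theorem givens_mul_mul_star_apply_of_ne (M : Matrix ι ι ℂ) {k : ι} (ha : k ≠ a) (hb : k ≠ b) :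
    (givens a b θ * M * star (givens a b θ)) k k = M k k := by
  rw [givens_mul_mul_star_apply_self, givens_apply_of_ne θ ha hb]
  simp

theorem exists_unitary_re_diag_transfer (M : Matrix ι ι ℂ) (hab : a ≠ b) {t : ℝ} (ht0 : 0 ≤ t)
    (ht : t ≤ (M a a).re - (M b b).re) :
    ∃ G ∈ unitaryGroup ι ℂ, ∀ k, ((G * M * star G) k k).re =
      (M k k).re + Pi.single (M := fun _ => ℝ) b t k - Pi.single (M := fun _ => ℝ) a t k := by
  -- As `θ` runs over `[0, π/2]`, the `(a, a)` entry of the rotated matrix moves continuously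
  -- from `M a a` to `M b b`, while the `(a, a)` and `(b, b)` entries keep their sum.
  obtain ⟨θ, -, hθ⟩ : (M a a).re - t ∈ (fun θ => Real.cos θ ^ 2 * (M a a).re +
      Real.sin θ ^ 2 * (M b b).re + Real.cos θ * Real.sin θ * (M a b + M b a).re) ''
        Set.Icc 0 (Real.pi / 2) := by
    refine intermediate_value_Icc' (by positivity) (Continuous.continuousOn (by fun_prop)) ?_
    simp only [Real.cos_zero, Real.sin_zero, Real.cos_pi_div_two, Real.sin_pi_div_two]
    constructor <;> linarith
  dsimp only at hθ
  refine ⟨givens a b θ, givens_mem_unitaryGroup θ hab, fun k => ?_⟩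
  rcases eq_or_ne k a with rfl | ha
  · rw [re_givens_mul_mul_star_apply_left, Pi.single_eq_of_ne hab, Pi.single_eq_same, hθ]
    ring
  rcases eq_or_ne k b with rfl | hb
  · rw [re_givens_mul_mul_star_apply_right θ M hab, Pi.single_eq_same, Pi.single_eq_of_ne ha]
    linear_combination -hθ + ((M a a).re + (M k k).re) * Real.sin_sq_add_cos_sq θ
  · simp [givens_mul_mul_star_apply_of_ne θ M ha hb, ha, hb]

end Givens

section UnitaryConj

variable {ι : Type*} [Fintype ι] [DecidableEq ι]

theorem mul_diagonal_mul_star_apply_self (U : Matrix ι ι ℂ) (c : ι → ℝ) (k : ι) :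
    (U * diagonal (fun i => (c i : ℂ)) * star U) k k = ((U.map Complex.normSq *ᵥ c) k : ℂ) := by
  simp only [mul_apply, diagonal_apply, mul_ite, mul_zero, Finset.sum_ite_eq', Finset.mem_univ,
    if_true, star_apply, mulVec, dotProduct, map_apply]
  push_cast
  refine Finset.sum_congr rfl fun i _ => ?_
  rw [Complex.normSq_eq_conj_mul_self, RCLike.star_def]
  ring

theorem re_mul_diagonal_mul_star_apply_self (U : Matrix ι ι ℂ) (c : ι → ℝ) (k : ι) :
    ((U * diagonal (fun i => (c i : ℂ)) * star U) k k).re = (U.map Complex.normSq *ᵥ c) k := by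
  rw [mul_diagonal_mul_star_apply_self, Complex.ofReal_re]

theorem trace_diagonal_mul_star_mul_diagonal_mul (U : Matrix ι ι ℂ) (c : ι → ℝ) (d : ι → ℂ) :
    (diagonal (fun i => (c i : ℂ)) * (star U * diagonal d * U)).trace =
      ∑ k, ((U.map Complex.normSq *ᵥ c) k : ℂ) * d k := by
  rw [← Matrix.mul_assoc, ← Matrix.mul_assoc, trace_mul_comm, ← Matrix.mul_assoc,
    ← Matrix.mul_assoc]
  simp only [trace, diag_apply, mul_diagonal, mul_diagonal_mul_star_apply_self]

theorem sum_normSq_of_mul_star_eq_one {U : Matrix ι ι ℂ} (hU : U * star U = 1) (i : ι) :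
    ∑ j, Complex.normSq (U i j) = 1 := by
  have := congrFun (congrFun hU i) i
  rw [mul_apply, one_apply_eq] at this
  exact_mod_cast (by simpa [Complex.mul_conj] using this : ∑ j, (Complex.normSq (U i j) : ℂ) = 1)

theorem map_normSq_mem_doublyStochastic {U : Matrix ι ι ℂ} (hU : U ∈ unitaryGroup ι ℂ) :
    U.map Complex.normSq ∈ doublyStochastic ℝ ι := by
  refine mem_doublyStochastic_iff_sum.2 ⟨fun i j => Complex.normSq_nonneg _,
    sum_normSq_of_mul_star_eq_one (mem_unitaryGroup_iff.1 hU), fun j => ?_⟩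
  have := sum_normSq_of_mul_star_eq_one (mem_unitaryGroup_iff.1 (Unitary.star_mem hU)) j
  simpa [star_apply, Complex.normSq_conj] using this

theorem permMatrix_mem_unitaryGroup (σ : Equiv.Perm ι) : σ.permMatrix ℂ ∈ unitaryGroup ι ℂ := by
  rw [mem_unitaryGroup_iff, star_eq_conjTranspose, conjTranspose_permMatrix, ← permMatrix_mul,
    inv_mul_cancel, permMatrix_one]

omit [Fintype ι] in
theorem map_normSq_permMatrix (σ : Equiv.Perm ι) :
    (σ.permMatrix ℂ).map Complex.normSq = σ.permMatrix ℝ := by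
  ext i j
  simp [PEquiv.toMatrix_apply, apply_ite Complex.normSq]

theorem isTransferClosed_map_normSq_mulVec_image_unitaryGroup (c : ι → ℝ) :
    IsTransferClosed ((fun U : Matrix ι ι ℂ => U.map Complex.normSq *ᵥ c) ''
      unitaryGroup ι ℂ) := by
  rintro _ ⟨U, hU, rfl⟩ a b hab t ht0 ht
  obtain ⟨G, hG, hGdiag⟩ := exists_unitary_re_diag_transfer
    (U * diagonal (fun i => (c i : ℂ)) * star U) hab ht0
    (by rwa [re_mul_diagonal_mul_star_apply_self, re_mul_diagonal_mul_star_apply_self])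
  refine ⟨G * U, Submonoid.mul_mem _ hG hU, funext fun k => ?_⟩
  have hconj : G * (U * diagonal (fun i => (c i : ℂ)) * star U) * star G =
      G * U * diagonal (fun i => (c i : ℂ)) * star (G * U) := by
    simp only [star_mul, Matrix.mul_assoc]
  have := hGdiag k
  rw [hconj, re_mul_diagonal_mul_star_apply_self, re_mul_diagonal_mul_star_apply_self] at this
  simpa using this

end UnitaryConj

theorem map_normSq_mulVec_image_unitaryGroup_eq_convexHull {n : ℕ} (c : Fin n → ℝ) :
    (fun U : Matrix (Fin n) (Fin n) ℂ => U.map Complex.normSq *ᵥ c) '' unitaryGroup (Fin n) ℂ =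
      convexHull ℝ (Set.range fun σ : Equiv.Perm (Fin n) => c ∘ σ) := by
  have horbit : (mulVecBilin ℝ ℝ).flip c '' {M | ∃ σ : Equiv.Perm (Fin n), σ.permMatrix ℝ = M} =
      Set.range fun σ : Equiv.Perm (Fin n) => c ∘ σ := by
    ext
    simp [permMatrix_mulVec]
  refine subset_antisymm ?_ ((isTransferClosed_map_normSq_mulVec_image_unitaryGroup c)
    |>.convexHull_range_comp_perm_subset ⟨1, one_mem _, by simp⟩)
  rintro _ ⟨U, hU, rfl⟩
  rw [← horbit, ← LinearMap.image_convexHull, ← doublyStochastic_eq_convexHull_permMatrix]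
  exact ⟨_, map_normSq_mem_doublyStochastic hU, rfl⟩

noncomputable def diagonalPairing {ι κ : Type*} [Fintype ι] (d : κ → ι → ℂ) :
    (ι → ℝ) →ₗ[ℝ] (κ → ℂ) :=
  LinearMap.pi fun j => ∑ k, (LinearMap.proj k).smulRight (d j k)

theorem diagonalPairing_apply {ι κ : Type*} [Fintype ι] (d : κ → ι → ℂ) (w : ι → ℝ) (j : κ) :
    diagonalPairing d w j = ∑ k, (w k : ℂ) * d j k := by
  simp [diagonalPairing, Complex.real_smul]

theorem jointCNumRange_diagonal {n m : ℕ} (c : Fin n → ℝ) (d : Fin m → Fin n → ℂ) :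
    jointCNumRange (diagonal fun i => (c i : ℂ)) (fun j => diagonal (d j)) =
      diagonalPairing d '' ((fun U : Matrix (Fin n) (Fin n) ℂ => U.map Complex.normSq *ᵥ c) ''
        unitaryGroup (Fin n) ℂ) := by
  ext p
  simp [jointCNumRange, Set.image_image, trace_diagonal_mul_star_mul_diagonal_mul, funext_iff,
    diagonalPairing_apply, eq_comm]

theorem setOf_trace_diagonal_mul_permMatrix_conj {n m : ℕ} (c : Fin n → ℝ)
    (d : Fin m → Fin n → ℂ) :
    {p : Fin m → ℂ | ∃ σ : Equiv.Perm (Fin n), ∀ j, p j = ((diagonal fun i => (c i : ℂ)) *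
      ((σ.permMatrix ℂ)ᵀ * diagonal (d j) * σ.permMatrix ℂ)).trace} =
      diagonalPairing d '' Set.range fun σ : Equiv.Perm (Fin n) => c ∘ σ := by
  have htranspose (σ : Equiv.Perm (Fin n)) : (σ.permMatrix ℂ)ᵀ = star (σ.permMatrix ℂ) := by
    rw [star_eq_conjTranspose, conjTranspose_permMatrix, transpose_permMatrix]
  rw [← Set.range_comp]
  ext p
  simp [htranspose, trace_diagonal_mul_star_mul_diagonal_mul, map_normSq_permMatrix,
    permMatrix_mulVec, funext_iff, diagonalPairing_apply, eq_comm]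

theorem stmt_3_general {n m : ℕ}
    (c : Fin n → ℝ) (C : Matrix (Fin n) (Fin n) ℂ)
    (hC : C = Matrix.diagonal fun i => (c i : ℂ))
    (A : Fin m → Matrix (Fin n) (Fin n) ℂ)
    (hA : ∀ j, ∃ d : Fin n → ℂ, A j = Matrix.diagonal d) :
    jointCNumRange C A =
      convexHull ℝ { p : Fin m → ℂ | ∃ σ : Equiv.Perm (Fin n),
        ∀ j, p j = (C * ((σ.permMatrix ℂ)ᵀ * A j * σ.permMatrix ℂ)).trace } ∧
    IsPolyhedral (jointCNumRange C A) := by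
  choose d hd using hA
  obtain rfl : A = fun j => diagonal (d j) := funext hd
  subst hC
  have hW : jointCNumRange (diagonal fun i => (c i : ℂ)) (fun j => diagonal (d j)) =
      diagonalPairing d '' convexHull ℝ (Set.range fun σ : Equiv.Perm (Fin n) => c ∘ σ) := by
    rw [jointCNumRange_diagonal, map_normSq_mulVec_image_unitaryGroup_eq_convexHull]
  rw [setOf_trace_diagonal_mul_permMatrix_conj, hW, LinearMap.image_convexHull]
  exact ⟨rfl, _, (Set.finite_range _).image _, rfl⟩

theorem stmt_3 {n m : ℕ} (hn : 0 < n) (hm : 0 < m)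
    (c : Fin n → ℝ) (C : Matrix (Fin n) (Fin n) ℂ)
    (hC : C = Matrix.diagonal fun i => (c i : ℂ))
    (A : Fin m → Matrix (Fin n) (Fin n) ℂ)
    (hA : ∀ j, ∃ d : Fin n → ℂ, A j = Matrix.diagonal d) :
    jointCNumRange C A =
      convexHull ℝ { p : Fin m → ℂ | ∃ σ : Equiv.Perm (Fin n),
        ∀ j, p j = (C * ((σ.permMatrix ℂ)ᵀ * A j * σ.permMatrix ℂ)).trace } ∧
    IsPolyhedral (jointCNumRange C A) :=
  stmt_3_general c C hC A hA
end

section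
/- Let n, m be positive integers, let C ∈ M_n be a non-scalar Hermitian matrix (i.e., C is not a real multiple of the identity), and let A_1, …, A_m ∈ M_n. Then W_C(A_1, …, A_m) is a singleton if and only if for each j = 1, …, m, A_j = a_j I is a scalar matrix for some a_j ∈ ℂ. -/
open Matrix

namespace Stmt9Aux

variable {n : ℕ}

noncomputable def rot (j k : Fin n) (z w : ℂ) : Matrix (Fin n) (Fin n) ℂ :=
  fun p q =>
    if p = j then (if q = j then z else if q = k then -(starRingEnd ℂ) w else 0)
    else if p = k then (if q = j then w else if q = k then (starRingEnd ℂ) z else 0)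
    else if q = p then 1 else 0

lemma sum_pair_support {ι : Type*} [Fintype ι] [DecidableEq ι] {j k : ι} (hjk : j ≠ k)
    (f : ι → ℂ) (hf : ∀ r, r ≠ j → r ≠ k → f r = 0) : ∑ r, f r = f j + f k := by
  rw [← Finset.sum_subset (Finset.subset_univ ({j, k} : Finset ι))]
  · rw [Finset.sum_pair hjk]
  · intro x _ hx
    simp only [Finset.mem_insert, Finset.mem_singleton, not_or] at hx
    exact hf x hx.1 hx.2

lemma rot_mem {j k : Fin n} (hjk : j ≠ k) {z w : ℂ}
    (hzw : z * (starRingEnd ℂ) z + w * (starRingEnd ℂ) w = 1) :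
    rot j k z w ∈ Matrix.unitaryGroup (Fin n) ℂ := by
  rw [Matrix.mem_unitaryGroup_iff]
  ext p q
  rw [Matrix.mul_apply]
  simp only [Matrix.star_apply, RCLike.star_def]
  by_cases hpj : p = j
  · rw [hpj]; clear hpj
    by_cases hqj : q = j
    · rw [hqj]; clear hqj
      rw [sum_pair_support hjk _ (fun r hrj hrk => by simp [rot, hrj, hrk, hjk])]
      simp [rot, hjk, hjk.symm, Matrix.one_apply]
      linear_combination hzw
    · by_cases hqk : q = k
      · rw [hqk]; clear hqk
        rw [sum_pair_support hjk _ (fun r hrj hrk => by simp [rot, hrj, hrk, hjk])]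
        simp [rot, hjk, hjk.symm, Matrix.one_apply]
        ring
      · rw [sum_pair_support hjk _ (fun r hrj hrk => by simp [rot, hrj, hrk, hjk, hqj, hqk])]
        simp [rot, hjk, hjk.symm, hqj, hqk, Ne.symm hqj, Ne.symm hqk, Matrix.one_apply]
  · by_cases hpk : p = k
    · rw [hpk]; clear hpk
      by_cases hqj : q = j
      · rw [hqj]; clear hqj
        rw [sum_pair_support hjk _ (fun r hrj hrk => by simp [rot, hrj, hrk, hjk])]
        simp [rot, hjk, hjk.symm, Matrix.one_apply]
        ring
      · by_cases hqk : q = k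
        · rw [hqk]; clear hqk
          rw [sum_pair_support hjk _ (fun r hrj hrk => by simp [rot, hrj, hrk, hjk])]
          simp [rot, hjk, hjk.symm, Matrix.one_apply]
          linear_combination hzw
        · rw [sum_pair_support hjk _
            (fun r hrj hrk => by simp [rot, hrj, hrk, hjk, hqj, hqk])]
          simp [rot, hjk, hjk.symm, hqj, hqk, Ne.symm hqj, Ne.symm hqk, Matrix.one_apply]
    · rw [Finset.sum_eq_single p (fun r _ hrp => by simp [rot, hpj, hpk, hrp, Ne.symm hrp])
        (by simp)]
      by_cases hqj : q = j
      · rw [hqj]; simp [rot, hpj, hpk, Matrix.one_apply, Ne.symm hpj]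
      · by_cases hqk : q = k
        · rw [hqk]; simp [rot, hpj, hpk, Matrix.one_apply, Ne.symm hpk]
        · simp [rot, hpj, hpk, hqj, hqk, Matrix.one_apply, eq_comm]

lemma mul_rot_col_j {j k : Fin n} (hjk : j ≠ k) (z w : ℂ)
    (B : Matrix (Fin n) (Fin n) ℂ) (a : Fin n) :
    (B * rot j k z w) a j = B a j * z + B a k * w := by
  rw [Matrix.mul_apply,
    sum_pair_support hjk _ (fun r hrj hrk => by simp [rot, hrj, hrk, Ne.symm hrj])]
  simp [rot, hjk, hjk.symm]

lemma mul_rot_col_k {j k : Fin n} (hjk : j ≠ k) (z w : ℂ)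
    (B : Matrix (Fin n) (Fin n) ℂ) (a : Fin n) :
    (B * rot j k z w) a k = B a j * (-(starRingEnd ℂ) w) + B a k * (starRingEnd ℂ) z := by
  rw [Matrix.mul_apply,
    sum_pair_support hjk _ (fun r hrj hrk => by simp [rot, hrj, hrk, hjk.symm, Ne.symm hrk])]
  simp [rot, hjk, hjk.symm]

lemma mul_rot_col_other {j k q : Fin n} (hqj : q ≠ j) (hqk : q ≠ k) (z w : ℂ)
    (B : Matrix (Fin n) (Fin n) ℂ) (a : Fin n) :
    (B * rot j k z w) a q = B a q := by
  have hz : ∀ r, r ≠ q → B a r * rot j k z w r q = 0 := by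
    intro r hrq
    by_cases hrj : r = j
    · simp [rot, hrj, hqj, hqk]
    · by_cases hrk : r = k
      · simp [rot, hrj, hrk, hqj, hqk]
      · simp [rot, hrj, hrk, Ne.symm hrq]
  rw [Matrix.mul_apply, Finset.sum_eq_single q (fun r _ hrq => hz r hrq) (by simp)]
  simp [rot, hqj, hqk]

lemma starRot_mul_row_j {j k : Fin n} (hjk : j ≠ k) (z w : ℂ)
    (X : Matrix (Fin n) (Fin n) ℂ) (q : Fin n) :
    (star (rot j k z w) * X) j q = (starRingEnd ℂ) z * X j q + (starRingEnd ℂ) w * X k q := by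
  rw [Matrix.mul_apply,
    sum_pair_support hjk _ (fun r hrj hrk => by
      simp [rot, Matrix.star_apply, hrj, hrk, Ne.symm hrj])]
  simp [rot, Matrix.star_apply, hjk, hjk.symm]

lemma starRot_mul_row_k {j k : Fin n} (hjk : j ≠ k) (z w : ℂ)
    (X : Matrix (Fin n) (Fin n) ℂ) (q : Fin n) :
    (star (rot j k z w) * X) k q = -w * X j q + z * X k q := by
  rw [Matrix.mul_apply,
    sum_pair_support hjk _ (fun r hrj hrk => by
      simp [rot, Matrix.star_apply, hrj, hrk, hjk.symm, Ne.symm hrk])]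
  simp [rot, Matrix.star_apply, hjk, hjk.symm]

lemma starRot_mul_row_other {j k p : Fin n} (hpj : p ≠ j) (hpk : p ≠ k) (z w : ℂ)
    (X : Matrix (Fin n) (Fin n) ℂ) (q : Fin n) :
    (star (rot j k z w) * X) p q = X p q := by
  have hz : ∀ r, r ≠ p → (star (rot j k z w)) p r * X r q = 0 := by
    intro r hrp
    by_cases hrj : r = j
    · simp [rot, Matrix.star_apply, hrj, hpj, hpk]
    · by_cases hrk : r = k
      · simp [rot, Matrix.star_apply, hrj, hrk, hpj, hpk]
      · simp [rot, Matrix.star_apply, hrj, hrk, Ne.symm hrp]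
  rw [Matrix.mul_apply, Finset.sum_eq_single p (fun r _ hrp => hz r hrp) (by simp)]
  simp [rot, Matrix.star_apply, hpj, hpk]

lemma trace_diag_mul (v : Fin n → ℂ) (M : Matrix (Fin n) (Fin n) ℂ) :
    (Matrix.diagonal v * M).trace = ∑ p, v p * M p p := by
  simp [Matrix.trace, Matrix.diag, Matrix.diagonal_mul]

lemma trace_rot {j k : Fin n} (hjk : j ≠ k) {z w : ℂ}
    (hzw : z * (starRingEnd ℂ) z + w * (starRingEnd ℂ) w = 1)
    (d : Fin n → ℝ) (B : Matrix (Fin n) (Fin n) ℂ) :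
    (Matrix.diagonal (fun i => (d i : ℂ)) * (star (rot j k z w) * B * rot j k z w)).trace
    = (Matrix.diagonal (fun i => (d i : ℂ)) * B).trace
      + ((d j : ℂ) - (d k : ℂ)) *
        ((starRingEnd ℂ) z * w * B j k + z * (starRingEnd ℂ) w * B k j
          + (starRingEnd ℂ) w * w * (B k k - B j j)) := by
  rw [trace_diag_mul, trace_diag_mul]
  have hjj : (star (rot j k z w) * B * rot j k z w) j j
      = (starRingEnd ℂ) z * (B j j * z + B j k * w)
        + (starRingEnd ℂ) w * (B k j * z + B k k * w) := by
    rw [mul_assoc, starRot_mul_row_j hjk, mul_rot_col_j hjk, mul_rot_col_j hjk]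
  have hkk : (star (rot j k z w) * B * rot j k z w) k k
      = -w * (B j j * (-(starRingEnd ℂ) w) + B j k * (starRingEnd ℂ) z)
        + z * (B k j * (-(starRingEnd ℂ) w) + B k k * (starRingEnd ℂ) z) := by
    rw [mul_assoc, starRot_mul_row_k hjk, mul_rot_col_k hjk, mul_rot_col_k hjk]
  have hkey : (∑ p, (d p : ℂ) * (star (rot j k z w) * B * rot j k z w) p p)
      - ∑ p, (d p : ℂ) * B p p
      = (d j : ℂ) * ((star (rot j k z w) * B * rot j k z w) j j - B j j)
        + (d k : ℂ) * ((star (rot j k z w) * B * rot j k z w) k k - B k k) := by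
    rw [← Finset.sum_sub_distrib,
      sum_pair_support hjk _ (fun p hpj hpk => by
        rw [mul_assoc, starRot_mul_row_other hpj hpk, mul_rot_col_other hpj hpk, sub_self])]
    ring
  rw [hjj, hkk] at hkey
  linear_combination hkey + ((d j : ℂ) * B j j + (d k : ℂ) * B k k) * hzw

lemma stepA (d : Fin n → ℝ) (B : Matrix (Fin n) (Fin n) ℂ)
    (h : ∀ U ∈ Matrix.unitaryGroup (Fin n) ℂ,
      (Matrix.diagonal (fun i => (d i : ℂ)) * (star U * B * U)).trace
        = (Matrix.diagonal (fun i => (d i : ℂ)) * B).trace)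
    {j k : Fin n} (hdjk : d j ≠ d k) :
    B j j = B k k ∧ B j k = 0 ∧ B k j = 0 := by
  have hjk : j ≠ k := fun e => hdjk (by rw [e])
  have hdne : (d j : ℂ) - (d k : ℂ) ≠ 0 := sub_ne_zero.mpr (by exact_mod_cast hdjk)
  have hE : ∀ z w : ℂ, z * (starRingEnd ℂ) z + w * (starRingEnd ℂ) w = 1 →
      (starRingEnd ℂ) z * w * B j k + z * (starRingEnd ℂ) w * B k j
        + (starRingEnd ℂ) w * w * (B k k - B j j) = 0 := by
    intro z w hzw
    have h1 := h (rot j k z w) (rot_mem hjk hzw)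
    rw [trace_rot hjk hzw] at h1
    have h2 : ((d j : ℂ) - (d k : ℂ)) *
        ((starRingEnd ℂ) z * w * B j k + z * (starRingEnd ℂ) w * B k j
          + (starRingEnd ℂ) w * w * (B k k - B j j)) = 0 := by
      linear_combination h1
    exact (mul_eq_zero.mp h2).resolve_left hdne
  set c : ℝ := (Real.sqrt 2)⁻¹ with hc
  have hc2 : (c : ℂ) * (c : ℂ) = (2 : ℂ)⁻¹ := by
    have h2 : c * c = (2 : ℝ)⁻¹ := by
      rw [hc, ← mul_inv, Real.mul_self_sqrt (by norm_num)]
    rw [← Complex.ofReal_mul, h2, Complex.ofReal_inv]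
    norm_num
  have E1 := hE (c : ℂ) (c : ℂ) (by rw [Complex.conj_ofReal]; linear_combination 2 * hc2)
  have E2 := hE (c : ℂ) (-(c : ℂ))
    (by rw [map_neg, Complex.conj_ofReal]; linear_combination 2 * hc2)
  have E3 := hE (c : ℂ) ((c : ℂ) * Complex.I)
    (by rw [_root_.map_mul, Complex.conj_I, Complex.conj_ofReal]
        linear_combination (1 - Complex.I * Complex.I) * hc2 - (2:ℂ)⁻¹ * Complex.I_mul_I)
  rw [Complex.conj_ofReal] at E1 E2 E3
  rw [map_neg, Complex.conj_ofReal] at E2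
  rw [_root_.map_mul, Complex.conj_I, Complex.conj_ofReal] at E3
  have eq1 : B j k + B k j + (B k k - B j j) = 0 := by
    linear_combination 2 * E1 - 2 * (B j k + B k j + (B k k - B j j)) * hc2
  have eq2 : -(B j k) - B k j + (B k k - B j j) = 0 := by
    linear_combination 2 * E2 - 2 * (-(B j k) - B k j + (B k k - B j j)) * hc2
  have eq3 : Complex.I * B j k - Complex.I * B k j + (B k k - B j j) = 0 := by
    linear_combination 2 * E3
      - 2 * (Complex.I * B j k - Complex.I * B k j + (B k k - B j j)) * hc2
      + (2 * (c:ℂ) * (c:ℂ) * (B k k - B j j)) * Complex.I_mul_I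
  have hdiag : B j j = B k k := by linear_combination (-(1:ℂ)/2) * eq1 + (-(1:ℂ)/2) * eq2
  have hP : B j k = 0 := by
    linear_combination ((1:ℂ)/4 + Complex.I/4) * eq1 + (-(1:ℂ)/4 + Complex.I/4) * eq2
      - (Complex.I/2) * eq3 + ((B j k - B k j)/2) * Complex.I_mul_I
  have hQ : B k j = 0 := by linear_combination eq1 - hP + hdiag
  exact ⟨hdiag, hP, hQ⟩

lemma keyLemma (d : Fin n → ℝ) (B : Matrix (Fin n) (Fin n) ℂ)
    (h : ∀ U ∈ Matrix.unitaryGroup (Fin n) ℂ,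
      (Matrix.diagonal (fun i => (d i : ℂ)) * (star U * B * U)).trace
        = (Matrix.diagonal (fun i => (d i : ℂ)) * B).trace)
    (hd : ∃ i k, d i ≠ d k) : ∃ a : ℂ, B = a • 1 := by
  obtain ⟨i0, k0, h0⟩ := hd
  have hex : ∀ p : Fin n, ∃ r, d r ≠ d p := by
    intro p
    by_cases h1 : d i0 = d p
    · exact ⟨k0, fun e => h0 (h1.trans e.symm)⟩
    · exact ⟨i0, h1⟩
  have hdiag : ∀ p q : Fin n, B p p = B q q := by
    intro p q
    by_cases hpq : d p = d q
    · obtain ⟨r, hr⟩ := hex p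
      have e1 := (stepA d B h (show d p ≠ d r from fun e => hr e.symm)).1
      have e2 := (stepA d B h (show d q ≠ d r from
        fun e => hr (e.symm.trans hpq.symm) )).1
      exact e1.trans e2.symm
    · exact (stepA d B h hpq).1
  have hoff : ∀ p q : Fin n, p ≠ q → B p q = 0 := by
    intro p q hpq
    by_cases hdp : d p = d q
    · obtain ⟨r, hr⟩ := hex p
      have hrp : r ≠ p := fun e => hr (by rw [e])
      have hrq : r ≠ q := fun e => hr (by rw [e, ← hdp])
      have hqr : q ≠ r := Ne.symm hrq
      have hPmem : rot q r 0 1 ∈ Matrix.unitaryGroup (Fin n) ℂ := rot_mem hqr (by simp)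
      have h' : ∀ U ∈ Matrix.unitaryGroup (Fin n) ℂ,
          (Matrix.diagonal (fun i => (d i : ℂ))
            * (star U * (star (rot q r 0 1) * B * rot q r 0 1) * U)).trace
          = (Matrix.diagonal (fun i => (d i : ℂ))
            * (star (rot q r 0 1) * B * rot q r 0 1)).trace := by
        intro U hU
        have e1 : star U * (star (rot q r 0 1) * B * rot q r 0 1) * U
            = star (rot q r 0 1 * U) * B * (rot q r 0 1 * U) := by
          rw [StarMul.star_mul]; simp only [mul_assoc]
        rw [e1, h _ (mul_mem hPmem hU), h _ hPmem]
      have hz := (stepA d _ h' (show d p ≠ d r from fun e => hr e.symm)).2.1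
      have e2 : (star (rot q r 0 1) * B * rot q r 0 1) p r = -(B p q) := by
        rw [mul_assoc, starRot_mul_row_other hpq (Ne.symm hrp), mul_rot_col_k hqr]
        simp
      rw [e2, neg_eq_zero] at hz
      exact hz
    · exact (stepA d B h hdp).2.1
  refine ⟨B i0 i0, ?_⟩
  ext p q
  by_cases hpq : p = q
  · rw [hpq]
    simp only [Matrix.smul_apply, Matrix.one_apply_eq, smul_eq_mul, mul_one]
    exact hdiag q i0
  · simp only [Matrix.smul_apply, Matrix.one_apply_ne hpq, smul_eq_mul, mul_zero]
    exact hoff p q hpq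

end Stmt9Aux

theorem stmt_9 {n m : ℕ} (hn : 0 < n) (hm : 0 < m)
    (C : Matrix (Fin n) (Fin n) ℂ) (hC : C.IsHermitian)
    (hCns : ∀ a : ℝ, C ≠ (a : ℂ) • (1 : Matrix (Fin n) (Fin n) ℂ))
    (A : Fin m → Matrix (Fin n) (Fin n) ℂ) :
    (∃ p : Fin m → ℂ, jointCNumRange C A = {p}) ↔
      (∀ j, ∃ a : ℂ, A j = a • (1 : Matrix (Fin n) (Fin n) ℂ)) := by
  constructor
  · rintro ⟨p, hp⟩ j
    have hmem : ∀ U ∈ Matrix.unitaryGroup (Fin n) ℂ,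
        (C * (star U * A j * U)).trace = p j := by
      intro U hU
      have hm2 : (fun j => (C * (star U * A j * U)).trace) ∈ jointCNumRange C A :=
        ⟨U, hU, fun _ => rfl⟩
      rw [hp, Set.mem_singleton_iff] at hm2
      exact congrFun hm2 j
    set V : Matrix (Fin n) (Fin n) ℂ := ↑(hC.eigenvectorUnitary) with hVdef
    have hVmem : V ∈ Matrix.unitaryGroup (Fin n) ℂ := (hC.eigenvectorUnitary).2
    set d : Fin n → ℝ := hC.eigenvalues with hddef
    have hspec : C = V * Matrix.diagonal (fun i => (d i : ℂ)) * star V :=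
      hC.spectral_theorem
    have hd : ∃ i k, d i ≠ d k := by
      by_contra hcon
      push_neg at hcon
      apply hCns (d ⟨0, hn⟩)
      rw [hspec]
      have he : (fun i => (d i : ℂ)) = fun _ => ((d ⟨0, hn⟩ : ℝ) : ℂ) :=
        funext fun i => by rw [hcon i ⟨0, hn⟩]
      rw [he, ← Matrix.smul_one_eq_diagonal, Matrix.mul_smul, Matrix.smul_mul, mul_one,
        Matrix.mem_unitaryGroup_iff.mp hVmem]
    have hVV : star V * V = 1 := Matrix.mem_unitaryGroup_iff'.mp hVmem
    have hconst : ∀ W ∈ Matrix.unitaryGroup (Fin n) ℂ,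
        (Matrix.diagonal (fun i => (d i : ℂ)) * (star W * A j * W)).trace = p j := by
      intro W hW
      have hU : W * star V ∈ Matrix.unitaryGroup (Fin n) ℂ :=
        mul_mem hW (Unitary.star_mem hVmem)
      have h1 := hmem (W * star V) hU
      rw [hspec] at h1
      have e1 : V * Matrix.diagonal (fun i => (d i : ℂ)) * star V
            * (star (W * star V) * A j * (W * star V))
          = V * (Matrix.diagonal (fun i => (d i : ℂ)) * (star W * A j * W)) * star V := by
        rw [StarMul.star_mul, star_star]
        simp only [mul_assoc]
        rw [← mul_assoc (star V) V, hVV, one_mul]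
      rw [e1] at h1
      rw [← h1, Matrix.trace_mul_cycle, ← mul_assoc, hVV, one_mul]
    have hc1 : (Matrix.diagonal (fun i => (d i : ℂ)) * A j).trace = p j := by
      have := hconst 1 (one_mem _)
      simpa using this
    have hfin : ∀ U ∈ Matrix.unitaryGroup (Fin n) ℂ,
        (Matrix.diagonal (fun i => (d i : ℂ)) * (star U * A j * U)).trace
          = (Matrix.diagonal (fun i => (d i : ℂ)) * A j).trace := by
      intro U hU
      rw [hconst U hU, hc1]
    exact Stmt9Aux.keyLemma d (A j) hfin hd
  · intro hA
    choose a ha using hA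
    refine ⟨fun j => a j * C.trace, ?_⟩
    have hval : ∀ U ∈ Matrix.unitaryGroup (Fin n) ℂ, ∀ j,
        (C * (star U * A j * U)).trace = a j * C.trace := by
      intro U hU j
      rw [ha j, Matrix.mul_smul, Matrix.smul_mul, mul_one, Matrix.mem_unitaryGroup_iff'.mp hU,
        Matrix.mul_smul, mul_one, Matrix.trace_smul, smul_eq_mul]
    ext q
    simp only [jointCNumRange, Set.mem_setOf_eq, Set.mem_singleton_iff]
    constructor
    · rintro ⟨U, hU, hq⟩
      funext j
      rw [hq j, hval U hU j]
    · rintro rfl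
      exact ⟨1, one_mem _, fun j => ((hval 1 (one_mem _) j).trans rfl).symm⟩
end

section
/- Let n, m be positive integers, let C ∈ M_n be a non-scalar Hermitian matrix (i.e., C is not a real multiple of the identity), and let A_1, …, A_m ∈ M_n. Then W_C(A_1, …, A_m) is a line segment in ℂ^m (i.e., the convex hull of two points, possibly equal) if and only if there is a Hermitian matrix H ∈ M_n such that A_j ∈ span_ℂ{I, H} for each j = 1, …, m. -/
/-!
If `A j = α j • 1 + β j • H` with `H` Hermitian, a point of `W_C(A)` has coordinates
`α j * tr C + β j * t` with `t = tr(C U* H U)` real; as `U` runs over the compact, path-connected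
unitary group, `t` fills an interval, so `W_C(A)` is a segment.

Conversely, if `W_C(A) = [p, q]`, then for every `U` there is a real `t` with
`tr(C U* A_j U) = p j + t * (q j - p j)` for all `j`, so suitable combinations `M` of the `A j` have
`tr(C U* M U)` independent of `U`. Such an `M` is scalar because `C` is not: after diagonalising `C`
and the Hermitian parts of `M`, a permutation `σ` of the eigenvectors of `M` gives the trace
`∑ i, c i * μ (σ i)`, and composing `σ` with a transposition `(i j)` changes it by
`(c i - c j) * (μ (σ j) - μ (σ i))`. For a coordinate `j₀` with `p j₀ ≠ q j₀`, the Hermitian part of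
`A j₀ / (q j₀ - p j₀)` is the required `H`.
-/

open Matrix

open Complex ComplexStarModule ComplexConjugate
-- The L2 operator norm makes square complex matrices a C⋆-algebra; its topology is the usual one.
open scoped Matrix.Norms.L2Operator

theorem IsCompact.exists_image_eq_segment {X : Type*} [TopologicalSpace X] {s : Set X}
    (hs : IsCompact s) (hc : IsConnected s) {f : X → ℝ} (hf : ContinuousOn f s) :
    ∃ a b : ℝ, f '' s = segment ℝ a b := by
  have hIcc := eq_Icc_of_connected_compact (hc.image f hf) (hs.image_of_continuousOn hf)
  obtain ⟨x, hx⟩ := hc.nonempty.image f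
  rw [hIcc] at hx
  exact ⟨_, _, hIcc.trans (segment_eq_Icc (hx.1.trans hx.2)).symm⟩

theorem apply_eq_of_sum_mul_comp_perm_eq {ι R : Type*} [Fintype ι] [DecidableEq ι] [CommRing R]
    [IsDomain R] {d μ : ι → R} {c : R} (h : ∀ σ : Equiv.Perm ι, ∑ k, d k * μ (σ k) = c)
    {i j : ι} (hij : d i ≠ d j) (a : ι) : μ a = μ i := by
  have hne : i ≠ j := fun h ↦ hij (h ▸ rfl)
  have key : ∀ σ : Equiv.Perm ι, μ (σ j) = μ (σ i) := by
    intro σ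
    have hswap : ∑ k, d k * μ ((σ * Equiv.swap i j) k) - ∑ k, d k * μ (σ k)
        = (d i - d j) * (μ (σ j) - μ (σ i)) := by
      rw [← Equiv.sum_comp (Equiv.swap i j) (fun k ↦ d k * μ ((σ * Equiv.swap i j) k)),
        ← Finset.sum_sub_distrib, Fintype.sum_eq_add i j hne]
      · simp only [Equiv.swap_apply_left, Equiv.swap_apply_right, Equiv.Perm.coe_mul,
          Function.comp_apply]
        ring
      · rintro k ⟨hki, hkj⟩
        simp [Equiv.swap_apply_of_ne_of_ne hki hkj]
    rw [h, h, sub_self, eq_comm, mul_eq_zero, sub_eq_zero, sub_eq_zero] at hswap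
    exact hswap.resolve_left hij
  rcases eq_or_ne a i with rfl | hai
  · rfl
  simpa [Equiv.swap_apply_of_ne_of_ne hne hai.symm] using key (Equiv.swap j a)

namespace Matrix

variable {n : Type*} [Fintype n]

theorem star_submatrix_mul_mul_submatrix {α : Type*} [Semiring α] [StarRing α]
    (A M : Matrix n n α) (σ : Equiv.Perm n) :
    star (A.submatrix id σ) * M * A.submatrix id σ = (star A * M * A).submatrix σ σ := by
  ext i j
  simp [Matrix.mul_apply, Finset.sum_mul]

section Unitary

variable [DecidableEq n]

-- Unlike for a general C⋆-algebra, no bound `‖u - 1‖ < 2` is needed: the spectrum of a matrix is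
-- finite, so `arg` is continuous on it.
theorem expUnitary_argSelfAdjoint (u : unitary (Matrix n n ℂ)) :
    selfAdjoint.expUnitary (Unitary.argSelfAdjoint u) = u := by
  apply Subtype.ext
  have harg : ContinuousOn (fun z : ℂ ↦ (arg z : ℂ)) (spectrum ℂ (u : Matrix n n ℂ)) :=
    (finite_spectrum _).continuousOn _
  rw [selfAdjoint.expUnitary_coe, Unitary.argSelfAdjoint_coe,
    ← CFC.exp_eq_normedSpace_exp (𝕜 := ℂ), ← cfc_comp_smul .., ← cfc_comp' ..]
  conv_rhs => rw [← cfc_id' ℂ (u : Matrix n n ℂ)]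
  refine cfc_congr fun z hz ↦ ?_
  have hz₁ : ‖z‖ = 1 := spectrum.norm_eq_one_of_unitary u.2 hz
  have : I * z.arg = log z :=
    Complex.ext (by simp [log_re, hz₁]) (by simp [log_im])
  simpa [← exp_eq_exp_ℂ, this] using exp_log (by aesop)

theorem isPathConnected_unitaryGroup :
    IsPathConnected (unitaryGroup n ℂ : Set (Matrix n n ℂ)) := by
  refine ⟨1, one_mem _, fun {u} hu ↦ (joinedIn_iff_joined (one_mem _) hu).mpr ?_⟩
  have := selfAdjoint.joined_one_expUnitary (Unitary.argSelfAdjoint ⟨u, hu⟩)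
  rw [expUnitary_argSelfAdjoint] at this
  exact this

theorem isCompact_unitaryGroup : IsCompact (unitaryGroup n ℂ : Set (Matrix n n ℂ)) := by
  refine Metric.isCompact_of_isClosed_isBounded isClosed_unitary
    ((Metric.isBounded_closedBall (x := 0) (r := 1)).subset fun u hu ↦ ?_)
  nontriviality Matrix n n ℂ
  rw [mem_closedBall_zero_iff, CStarRing.norm_of_mem_unitary hu]

end Unitary

section CTrace

def cTrace (C U : Matrix n n ℂ) : Matrix n n ℂ →ₗ[ℂ] ℂ where
  toFun M := (C * (star U * M * U)).trace
  map_add' M N := by simp [Matrix.mul_add, Matrix.add_mul]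
  map_smul' c M := by simp

theorem cTrace_apply (C U M : Matrix n n ℂ) : cTrace C U M = (C * (star U * M * U)).trace := rfl

variable {C : Matrix n n ℂ}

theorem IsHermitian.conj_cTrace (hC : C.IsHermitian) (U M : Matrix n n ℂ) :
    conj (cTrace C U M) = cTrace C U (star M) := by
  simp only [cTrace_apply, ← RCLike.star_def, ← trace_conjTranspose, conjTranspose_mul, hC.eq,
    star_eq_conjTranspose, conjTranspose_conjTranspose]
  rw [Matrix.trace_mul_comm, Matrix.mul_assoc]

theorem IsHermitian.cTrace_eq_re (hC : C.IsHermitian) {M : Matrix n n ℂ} (hM : M.IsHermitian)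
    (U : Matrix n n ℂ) : cTrace C U M = (cTrace C U M).re :=
  (conj_eq_iff_re.mp <| (hC.conj_cTrace U M).trans <| by rw [star_eq_conjTranspose, hM.eq]).symm

theorem IsHermitian.cTrace_realPart (hC : C.IsHermitian) (U M : Matrix n n ℂ) :
    cTrace C U (ℜ M) = (cTrace C U M).re := by
  rw [realPart_apply_coe, re_eq_add_conj, LinearMap.map_smul_of_tower, map_add,
    ← hC.conj_cTrace, Complex.real_smul]
  push_cast; ring

theorem IsHermitian.cTrace_imaginaryPart (hC : C.IsHermitian) (U M : Matrix n n ℂ) :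
    cTrace C U (ℑ M) = (cTrace C U M).im := by
  rw [imaginaryPart_apply_coe, im_eq_sub_conj, map_smul, LinearMap.map_smul_of_tower, map_sub,
    ← hC.conj_cTrace, Complex.real_smul, div_eq_mul_inv, mul_inv, inv_I]
  push_cast; ring

variable [DecidableEq n]

theorem cTrace_one {U : Matrix n n ℂ} (hU : U ∈ unitaryGroup n ℂ) : cTrace C U 1 = C.trace := by
  simp [cTrace_apply, Unitary.coe_star_mul_self ⟨U, hU⟩]

theorem IsHermitian.star_eigenvectorUnitary_mul_mul (hC : C.IsHermitian) :
    star (hC.eigenvectorUnitary : Matrix n n ℂ) * C * (hC.eigenvectorUnitary : Matrix n n ℂ) =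
      diagonal (RCLike.ofReal ∘ hC.eigenvalues) := by
  simpa using hC.conjStarAlgAut_star_eigenvectorUnitary

theorem IsHermitian.eq_smul_one_of_eigenvalues_eq (hC : C.IsHermitian) {i : n}
    (h : ∀ j, hC.eigenvalues j = hC.eigenvalues i) : C = (hC.eigenvalues i : ℂ) • 1 := by
  have hdiag : diagonal (RCLike.ofReal ∘ hC.eigenvalues) =
      (hC.eigenvalues i : ℂ) • (1 : Matrix n n ℂ) := by
    rw [smul_one_eq_diagonal]
    exact congrArg diagonal (funext fun j ↦ by simp [h j])
  refine hC.spectral_theorem.trans ?_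
  rw [hdiag, map_smul, map_one]

theorem IsHermitian.exists_eigenvalues_ne (hC : C.IsHermitian)
    (hCns : ∀ a : ℝ, C ≠ (a : ℂ) • 1) : ∃ i j, hC.eigenvalues i ≠ hC.eigenvalues j := by
  by_contra! h
  rcases isEmpty_or_nonempty n with hn | ⟨⟨i⟩⟩
  · exact hCns 0 (Subsingleton.elim _ _)
  · exact hCns _ (hC.eq_smul_one_of_eigenvalues_eq fun j ↦ h j i)

theorem IsHermitian.exists_cTrace_eq_sum_perm (hC : C.IsHermitian) {M : Matrix n n ℂ}
    (hM : M.IsHermitian) (σ : Equiv.Perm n) :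
    ∃ U ∈ unitaryGroup n ℂ, cTrace C U M = ∑ i, (hC.eigenvalues i : ℂ) * hM.eigenvalues (σ i) := by
  set V : Matrix n n ℂ := (hC.eigenvectorUnitary : Matrix n n ℂ)
  set W : Matrix n n ℂ := (hM.eigenvectorUnitary : Matrix n n ℂ).submatrix id σ
  have hMW : star W * M * W = diagonal (RCLike.ofReal ∘ hM.eigenvalues ∘ σ) := by
    rw [star_submatrix_mul_mul_submatrix, hM.star_eigenvectorUnitary_mul_mul,
      submatrix_diagonal_equiv]
    rfl
  have hW : W ∈ unitaryGroup n ℂ := by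
    rw [mem_unitaryGroup_iff', ← Matrix.mul_one (star W), star_submatrix_mul_mul_submatrix]
    simp
  refine ⟨W * star V, mul_mem hW (Unitary.star_mem hC.eigenvectorUnitary.2), ?_⟩
  calc cTrace C (W * star V) M = (star V * C * V * (star W * M * W)).trace := by
        simp only [cTrace_apply, star_mul, star_star, ← Matrix.mul_assoc]
        rw [Matrix.trace_mul_comm]
        simp only [Matrix.mul_assoc]
    _ = _ := by
        rw [hC.star_eigenvectorUnitary_mul_mul, hMW, diagonal_mul_diagonal, trace_diagonal]
        rfl

theorem IsHermitian.exists_eq_smul_one_of_cTrace_eq (hC : C.IsHermitian)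
    (hCns : ∀ a : ℝ, C ≠ (a : ℂ) • 1) {M : Matrix n n ℂ} (hM : M.IsHermitian) {c : ℂ}
    (h : ∀ U ∈ unitaryGroup n ℂ, cTrace C U M = c) : ∃ r : ℝ, M = (r : ℂ) • 1 := by
  obtain ⟨i, j, hij⟩ := hC.exists_eigenvalues_ne hCns
  have hsum (σ : Equiv.Perm n) :
      ∑ k, (hC.eigenvalues k : ℂ) * hM.eigenvalues (σ k) = c := by
    obtain ⟨U, hU, hUσ⟩ := hC.exists_cTrace_eq_sum_perm hM σ
    rw [← hUσ, h U hU]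
  refine ⟨hM.eigenvalues i, hM.eq_smul_one_of_eigenvalues_eq fun a ↦ ?_⟩
  exact_mod_cast apply_eq_of_sum_mul_comp_perm_eq (d := fun k ↦ (hC.eigenvalues k : ℂ))
    (μ := fun k ↦ (hM.eigenvalues k : ℂ)) hsum (by exact_mod_cast hij) a

theorem exists_eq_smul_one_add_realPart_of_im_cTrace_eq (hC : C.IsHermitian)
    (hCns : ∀ a : ℝ, C ≠ (a : ℂ) • 1) {M : Matrix n n ℂ} {c : ℝ}
    (h : ∀ U ∈ unitaryGroup n ℂ, (cTrace C U M).im = c) : ∃ r : ℂ, M = r • 1 + ℜ M := by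
  obtain ⟨y, hy⟩ := hC.exists_eq_smul_one_of_cTrace_eq hCns
    (isHermitian_iff_isSelfAdjoint.mpr (ℑ M).2) fun U hU ↦ by rw [hC.cTrace_imaginaryPart, h U hU]
  refine ⟨I * y, ?_⟩
  conv_lhs => rw [← realPart_add_I_smul_imaginaryPart M, hy]
  rw [smul_smul, add_comm]

theorem exists_eq_smul_one_of_cTrace_eq (hC : C.IsHermitian) (hCns : ∀ a : ℝ, C ≠ (a : ℂ) • 1)
    {M : Matrix n n ℂ} {c : ℂ} (h : ∀ U ∈ unitaryGroup n ℂ, cTrace C U M = c) :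
    ∃ r : ℂ, M = r • 1 := by
  obtain ⟨r, hr⟩ := exists_eq_smul_one_add_realPart_of_im_cTrace_eq hC hCns (c := c.im)
    fun U hU ↦ by rw [h U hU]
  obtain ⟨x, hx⟩ := hC.exists_eq_smul_one_of_cTrace_eq hCns
    (isHermitian_iff_isSelfAdjoint.mpr (ℜ M).2) fun U hU ↦ by rw [hC.cTrace_realPart, h U hU]
  exact ⟨r + x, by rw [hr, hx, add_smul]⟩

end CTrace

end Matrix

theorem jointCNumRange_eq_image {n m : ℕ} (C : Matrix (Fin n) (Fin n) ℂ)
    (A : Fin m → Matrix (Fin n) (Fin n) ℂ) :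
    jointCNumRange C A = (fun U j ↦ cTrace C U (A j)) '' (unitaryGroup (Fin n) ℂ) := by
  ext z
  simp [jointCNumRange, funext_iff, eq_comm, cTrace_apply]

theorem exists_jointCNumRange_eq_segment {n m : ℕ} {C : Matrix (Fin n) (Fin n) ℂ}
    (hC : C.IsHermitian) {A : Fin m → Matrix (Fin n) (Fin n) ℂ} {H : Matrix (Fin n) (Fin n) ℂ}
    (hH : H.IsHermitian) (hA : ∀ j, ∃ α β : ℂ, A j = α • 1 + β • H) :
    ∃ p q : Fin m → ℂ, jointCNumRange C A = segment ℝ p q := by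
  choose α β hαβ using hA
  set g : Matrix (Fin n) (Fin n) ℂ → ℝ := fun U ↦ (cTrace C U H).re
  have hg : Continuous g := by
    simp only [g, cTrace_apply]
    fun_prop
  obtain ⟨a, b, hab⟩ := isCompact_unitaryGroup.exists_image_eq_segment
    isPathConnected_unitaryGroup.isConnected hg.continuousOn
  set L : ℝ →ᵃ[ℝ] (Fin m → ℂ) :=
    AffineMap.lineMap (fun j ↦ α j * C.trace) (fun j ↦ α j * C.trace + β j)
  have hL : Set.EqOn (fun U j ↦ cTrace C U (A j)) (L ∘ g) (unitaryGroup (Fin n) ℂ) := by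
    intro U hU
    ext j
    change cTrace C U (A j) = L (g U) j
    rw [hαβ, map_add, map_smul, map_smul, cTrace_one hU, hC.cTrace_eq_re hH]
    simp only [L, g, AffineMap.lineMap_apply, vsub_eq_sub, vadd_eq_add, Pi.add_apply,
      Pi.smul_apply, Pi.sub_apply, add_sub_cancel_left, real_smul, smul_eq_mul]
    ring
  refine ⟨L a, L b, ?_⟩
  rw [← image_segment, ← hab, Set.image_image, jointCNumRange_eq_image, hL.image_eq]
  rfl

theorem exists_cTrace_eq_of_jointCNumRange_eq_segment {n m : ℕ} {C : Matrix (Fin n) (Fin n) ℂ}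
    {A : Fin m → Matrix (Fin n) (Fin n) ℂ} {p q : Fin m → ℂ}
    (h : jointCNumRange C A = segment ℝ p q) {U : Matrix (Fin n) (Fin n) ℂ}
    (hU : U ∈ unitaryGroup (Fin n) ℂ) : ∃ t : ℝ, ∀ j, cTrace C U (A j) = p j + t * (q j - p j) := by
  have hmem : (fun j ↦ cTrace C U (A j)) ∈ segment ℝ p q := h ▸ ⟨U, hU, fun j ↦ rfl⟩
  rw [segment_eq_image'] at hmem
  obtain ⟨t, -, ht⟩ := hmem
  exact ⟨t, fun j ↦ by simpa using (congrFun ht j).symm⟩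

theorem exists_isHermitian_of_jointCNumRange_eq_segment {n m : ℕ} {C : Matrix (Fin n) (Fin n) ℂ}
    (hC : C.IsHermitian) (hCns : ∀ a : ℝ, C ≠ (a : ℂ) • 1)
    {A : Fin m → Matrix (Fin n) (Fin n) ℂ} {p q : Fin m → ℂ}
    (h : jointCNumRange C A = segment ℝ p q) :
    ∃ H : Matrix (Fin n) (Fin n) ℂ, H.IsHermitian ∧ ∀ j, ∃ α β : ℂ, A j = α • 1 + β • H := by
  choose! t ht using fun U (hU : U ∈ unitaryGroup (Fin n) ℂ) ↦
    exists_cTrace_eq_of_jointCNumRange_eq_segment h hU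
  by_cases hpq : p = q
  · subst hpq
    refine ⟨0, isHermitian_zero, fun j ↦ ?_⟩
    obtain ⟨r, hr⟩ := exists_eq_smul_one_of_cTrace_eq hC hCns (M := A j) (c := p j)
      fun U hU ↦ by simp [ht U hU]
    exact ⟨r, 0, by simp [hr]⟩
  obtain ⟨j₀, hj₀⟩ := Function.ne_iff.mp hpq
  set N := (q j₀ - p j₀)⁻¹ • A j₀
  have hN (U) (hU : U ∈ unitaryGroup (Fin n) ℂ) :
      cTrace C U N = (q j₀ - p j₀)⁻¹ * p j₀ + t U := by
    rw [map_smul, ht U hU, smul_eq_mul]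
    field_simp [sub_ne_zero.mpr hj₀.symm]
  obtain ⟨r, hr⟩ := exists_eq_smul_one_add_realPart_of_im_cTrace_eq hC hCns (M := N)
    (c := ((q j₀ - p j₀)⁻¹ * p j₀).im) fun U hU ↦ by simp [hN U hU]
  refine ⟨ℜ N, isHermitian_iff_isSelfAdjoint.mpr (ℜ N).2, fun j ↦ ?_⟩
  obtain ⟨s, hs⟩ := exists_eq_smul_one_of_cTrace_eq hC hCns (M := A j - (q j - p j) • N)
    (c := p j - (q j - p j) * ((q j₀ - p j₀)⁻¹ * p j₀)) fun U hU ↦ by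
      rw [map_sub, map_smul, hN U hU, ht U hU, smul_eq_mul]
      ring
  refine ⟨s + (q j - p j) * r, q j - p j, ?_⟩
  calc A j = (A j - (q j - p j) • N) + (q j - p j) • N := (sub_add_cancel _ _).symm
    _ = s • 1 + (q j - p j) • (r • 1 + ℜ N) := by rw [← hs, ← hr]
    _ = _ := by module

theorem stmt_10_general {n m : ℕ}
    (C : Matrix (Fin n) (Fin n) ℂ) (hC : C.IsHermitian)
    (hCns : ∀ a : ℝ, C ≠ (a : ℂ) • (1 : Matrix (Fin n) (Fin n) ℂ))
    (A : Fin m → Matrix (Fin n) (Fin n) ℂ) :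
    (∃ p q : Fin m → ℂ, jointCNumRange C A = segment ℝ p q) ↔
      (∃ H : Matrix (Fin n) (Fin n) ℂ, H.IsHermitian ∧
        ∀ j, ∃ α β : ℂ, A j = α • (1 : Matrix (Fin n) (Fin n) ℂ) + β • H) :=
  ⟨fun ⟨_, _, h⟩ ↦ exists_isHermitian_of_jointCNumRange_eq_segment hC hCns h,
    fun ⟨_, hH, hA⟩ ↦ exists_jointCNumRange_eq_segment hC hH hA⟩

theorem stmt_10 {n m : ℕ} (hn : 0 < n) (hm : 0 < m)
    (C : Matrix (Fin n) (Fin n) ℂ) (hC : C.IsHermitian)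
    (hCns : ∀ a : ℝ, C ≠ (a : ℂ) • (1 : Matrix (Fin n) (Fin n) ℂ))
    (A : Fin m → Matrix (Fin n) (Fin n) ℂ) :
    (∃ p q : Fin m → ℂ, jointCNumRange C A = segment ℝ p q) ↔
      (∃ H : Matrix (Fin n) (Fin n) ℂ, H.IsHermitian ∧
        ∀ j, ∃ α β : ℂ, A j = α • (1 : Matrix (Fin n) (Fin n) ℂ) + β • H) :=
  stmt_10_general C hC hCns A
end

section
/- Let A_1, …, A_m ∈ M_n be Hermitian matrices and suppose C = diag(c_1, …, c_n) = ξ_1 I_{n_1} ⊕ … ⊕ ξ_r I_{n_r} with real numbers ξ_1 > … > ξ_r and positive integers n_1 + … + n_r = n. If U ∈ M_n is unitary and (tr(C U*A_1 U), …, tr(C U*A_m U)) is a conical point of W_C(A_1, …, A_m), then for each j = 1, …, m, U*A_jU = A_{j1} ⊕ … ⊕ A_{jr} ∈ M_{n_1} ⊕ … ⊕ M_{n_r} is block diagonal with the same direct sum structure as C. -/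
open Matrix Complex


namespace Stmt12Aux

lemma sum_pair_support {α M : Type*} [Fintype α] [DecidableEq α] [AddCommMonoid M]
    {s t : α} (hst : s ≠ t) (f : α → M) (h : ∀ k, k ≠ s → k ≠ t → f k = 0) :
    ∑ k, f k = f s + f t := by
  rw [← Finset.sum_pair hst]
  exact (Finset.sum_subset (Finset.subset_univ _) fun x _ hx => by
    simp only [Finset.mem_insert, Finset.mem_singleton, not_or] at hx
    exact h x hx.1 hx.2).symm

variable {n : ℕ}

/-- matrix equal to identity outside the `{s,t}×{s,t}` block, with block entries `a b d e`. -/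
def emb (s t : Fin n) (a b d e : ℂ) : Matrix (Fin n) (Fin n) ℂ :=
  Matrix.of fun i j =>
    if i = s then (if j = s then a else if j = t then b else 0)
    else if i = t then (if j = s then d else if j = t then e else 0)
    else if j = i then 1 else 0

variable {s t : Fin n} {a b d e a' b' d' e' : ℂ}

lemma emb_apply_row_s (j : Fin n) :
    emb s t a b d e s j = if j = s then a else if j = t then b else 0 := by
  simp [emb]

lemma emb_apply_row_t (hst : s ≠ t) (j : Fin n) :
    emb s t a b d e t j = if j = s then d else if j = t then e else 0 := by
  simp [emb, Ne.symm hst]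

lemma emb_apply_of_ne {i : Fin n} (his : i ≠ s) (hit : i ≠ t) (j : Fin n) :
    emb s t a b d e i j = if j = i then 1 else 0 := by
  simp [emb, his, hit]

lemma emb_one (hst : s ≠ t) : emb s t 1 0 0 1 = (1 : Matrix (Fin n) (Fin n) ℂ) := by
  ext i j
  by_cases his : i = s
  · rw [his, emb_apply_row_s, Matrix.one_apply]
    by_cases hjs : j = s <;> by_cases hjt : j = t <;> simp_all [eq_comm]
  · by_cases hit : i = t
    · rw [hit, emb_apply_row_t hst, Matrix.one_apply]
      by_cases hjs : j = s <;> by_cases hjt : j = t <;> simp_all [eq_comm]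
    · rw [emb_apply_of_ne his hit, Matrix.one_apply]
      simp [eq_comm]

lemma star_emb (hst : s ≠ t) : star (emb s t a b d e) =
    emb s t (starRingEnd ℂ a) (starRingEnd ℂ d) (starRingEnd ℂ b) (starRingEnd ℂ e) := by
  ext i j
  rw [Matrix.star_eq_conjTranspose, conjTranspose_apply]
  by_cases his : i = s
  · rw [his, emb_apply_row_s]
    by_cases hjs : j = s
    · rw [hjs, emb_apply_row_s]; simp
    · by_cases hjt : j = t
      · rw [hjt, emb_apply_row_t hst]; simp [hst, Ne.symm hst]
      · rw [emb_apply_of_ne hjs hjt]; simp [hjs, hjt, Ne.symm hjs]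
  · by_cases hit : i = t
    · rw [hit, emb_apply_row_t hst]
      by_cases hjs : j = s
      · rw [hjs, emb_apply_row_s]; simp [hst, Ne.symm hst]
      · by_cases hjt : j = t
        · rw [hjt, emb_apply_row_t hst]; simp [hst, Ne.symm hst]
        · rw [emb_apply_of_ne hjs hjt]; simp [hjs, hjt, Ne.symm hjt]
    · rw [emb_apply_of_ne his hit]
      by_cases hjs : j = s
      · rw [hjs, emb_apply_row_s]; simp [his, hit, Ne.symm his, Ne.symm hit]
      · by_cases hjt : j = t
        · rw [hjt, emb_apply_row_t hst]; simp [his, hit, Ne.symm his, Ne.symm hit]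
        · rw [emb_apply_of_ne hjs hjt]; simp [eq_comm]

lemma emb_mul (hst : s ≠ t) :
    emb s t a b d e * emb s t a' b' d' e' =
      emb s t (a*a'+b*d') (a*b'+b*e') (d*a'+e*d') (d*b'+e*e') := by
  ext i j
  rw [Matrix.mul_apply]
  by_cases his : i = s
  · rw [his, sum_pair_support hst _ (fun k hks hkt => by rw [emb_apply_row_s]; simp [hks, hkt]),
      emb_apply_row_s, emb_apply_row_s, emb_apply_row_s, emb_apply_row_t hst,
      emb_apply_row_s]
    by_cases hjs : j = s <;> by_cases hjt : j = t <;> simp_all [hst, Ne.symm hst]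
  · by_cases hit : i = t
    · rw [hit, sum_pair_support hst _ (fun k hks hkt => by
          rw [emb_apply_row_t hst]; simp [hks, hkt]),
        emb_apply_row_t hst, emb_apply_row_t hst, emb_apply_row_s, emb_apply_row_t hst,
        emb_apply_row_t hst]
      by_cases hjs : j = s <;> by_cases hjt : j = t <;> simp_all [hst, Ne.symm hst]
    · rw [Finset.sum_eq_single i (fun k _ hki => by
          rw [emb_apply_of_ne his hit]; simp [hki]) (by simp),
        emb_apply_of_ne his hit, emb_apply_of_ne his hit, emb_apply_of_ne his hit]
      simp

end Stmt12Aux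

namespace Part2

open Stmt12Aux

variable {n : ℕ} {s t : Fin n} {a b d e : ℂ}

lemma mul_emb_col_s (hst : s ≠ t) (B : Matrix (Fin n) (Fin n) ℂ) (k : Fin n) :
    (B * emb s t a b d e) k s = B k s * a + B k t * d := by
  rw [Matrix.mul_apply,
    sum_pair_support hst _ (fun l hls hlt => by rw [emb_apply_of_ne hls hlt]; simp [Ne.symm hls]),
    emb_apply_row_s, emb_apply_row_t hst]
  simp [hst, Ne.symm hst]

lemma mul_emb_col_t (hst : s ≠ t) (B : Matrix (Fin n) (Fin n) ℂ) (k : Fin n) :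
    (B * emb s t a b d e) k t = B k s * b + B k t * e := by
  rw [Matrix.mul_apply,
    sum_pair_support hst _ (fun l hls hlt => by rw [emb_apply_of_ne hls hlt]; simp [Ne.symm hlt]),
    emb_apply_row_s, emb_apply_row_t hst]
  simp [hst, Ne.symm hst]

lemma mul_emb_col_ne (hst : s ≠ t) {i : Fin n} (his : i ≠ s) (hit : i ≠ t)
    (B : Matrix (Fin n) (Fin n) ℂ) (k : Fin n) :
    (B * emb s t a b d e) k i = B k i := by
  rw [Matrix.mul_apply, Finset.sum_eq_single i (fun l _ hli => by
      by_cases hls : l = s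
      · rw [hls, emb_apply_row_s]; simp [his, hit]
      · by_cases hlt : l = t
        · rw [hlt, emb_apply_row_t hst]; simp [his, hit]
        · rw [emb_apply_of_ne hls hlt]; simp [Ne.symm hli]) (by simp),
    emb_apply_of_ne his hit]
  simp

lemma emb_mul_row_s (hst : s ≠ t) (B : Matrix (Fin n) (Fin n) ℂ) (l : Fin n) :
    (emb s t a b d e * B) s l = a * B s l + b * B t l := by
  rw [Matrix.mul_apply,
    sum_pair_support hst _ (fun k hks hkt => by rw [emb_apply_row_s]; simp [hks, hkt]),
    emb_apply_row_s, emb_apply_row_s]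
  simp [hst, Ne.symm hst]

lemma emb_mul_row_t (hst : s ≠ t) (B : Matrix (Fin n) (Fin n) ℂ) (l : Fin n) :
    (emb s t a b d e * B) t l = d * B s l + e * B t l := by
  rw [Matrix.mul_apply,
    sum_pair_support hst _ (fun k hks hkt => by rw [emb_apply_row_t hst]; simp [hks, hkt]),
    emb_apply_row_t hst, emb_apply_row_t hst]
  simp [hst, Ne.symm hst]

lemma emb_mul_row_ne {i : Fin n} (his : i ≠ s) (hit : i ≠ t)
    (B : Matrix (Fin n) (Fin n) ℂ) (l : Fin n) :
    (emb s t a b d e * B) i l = B i l := by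
  rw [Matrix.mul_apply, Finset.sum_eq_single i (fun k _ hki => by
      rw [emb_apply_of_ne his hit]; simp [hki]) (by simp),
    emb_apply_of_ne his hit]
  simp

end Part2

namespace Part3

open Stmt12Aux Part2

variable {n : ℕ} {s t : Fin n}

lemma trace_diag (cv : Fin n → ℝ) (M : Matrix (Fin n) (Fin n) ℂ) :
    (Matrix.diagonal (fun i => (cv i : ℂ)) * M).trace = ∑ i, (cv i : ℂ) * M i i := by
  simp [Matrix.trace, Matrix.diag, Matrix.diagonal_mul]

lemma trace_key (hst : s ≠ t) (cv : Fin n → ℝ) (B : Matrix (Fin n) (Fin n) ℂ)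
    (a b d e a' b' d' e' : ℂ) :
    (Matrix.diagonal (fun i => (cv i : ℂ)) *
        (emb s t a' b' d' e' * B * emb s t a b d e)).trace
      = (Matrix.diagonal (fun i => (cv i : ℂ)) * B).trace
        + (cv s : ℂ) * ((a' * B s s + b' * B t s) * a + (a' * B s t + b' * B t t) * d - B s s)
        + (cv t : ℂ) * ((d' * B s s + e' * B t s) * b + (d' * B s t + e' * B t t) * e - B t t) := by
  have Wss : (emb s t a' b' d' e' * B * emb s t a b d e) s s
      = (a' * B s s + b' * B t s) * a + (a' * B s t + b' * B t t) * d := by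
    rw [mul_emb_col_s hst, emb_mul_row_s hst, emb_mul_row_s hst]
  have Wtt : (emb s t a' b' d' e' * B * emb s t a b d e) t t
      = (d' * B s s + e' * B t s) * b + (d' * B s t + e' * B t t) * e := by
    rw [mul_emb_col_t hst, emb_mul_row_t hst, emb_mul_row_t hst]
  have Wne : ∀ i, i ≠ s → i ≠ t →
      (emb s t a' b' d' e' * B * emb s t a b d e) i i = B i i := by
    intro i his hit
    rw [mul_emb_col_ne hst his hit, emb_mul_row_ne his hit]
  rw [trace_diag, trace_diag]
  set g : Fin n → ℂ := fun i =>
    if i = s then (cv s : ℂ) *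
      ((a' * B s s + b' * B t s) * a + (a' * B s t + b' * B t t) * d - B s s)
    else if i = t then (cv t : ℂ) *
      ((d' * B s s + e' * B t s) * b + (d' * B s t + e' * B t t) * e - B t t)
    else 0 with hg
  have h1 : ∀ i, (cv i : ℂ) * (emb s t a' b' d' e' * B * emb s t a b d e) i i
      = (cv i : ℂ) * B i i + g i := by
    intro i
    by_cases his : i = s
    · rw [his, Wss, hg]; simp only [ite_true, eq_self_iff_true, if_true]; ring
    · by_cases hit : i = t
      · rw [hit, Wtt, hg]
        simp only [if_neg (Ne.symm hst), ite_true, eq_self_iff_true, if_true]; ring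
      · rw [Wne i his hit, hg]; simp [his, hit]
  calc ∑ i, (cv i : ℂ) * (emb s t a' b' d' e' * B * emb s t a b d e) i i
      = ∑ i, ((cv i : ℂ) * B i i + g i) := by simp only [h1]
    _ = (∑ i, (cv i : ℂ) * B i i) + (∑ i, g i) := Finset.sum_add_distrib
    _ = _ := by
        rw [sum_pair_support hst g (fun k hks hkt => by simp [hg, hks, hkt])]
        simp only [hg, ite_true, eq_self_iff_true, if_true, if_neg (Ne.symm hst)]
        ring

end Part3

namespace Part4

open Stmt12Aux Part2 Part3

variable {n : ℕ} {s t : Fin n} {x y ω : ℂ}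

lemma rot_unitary (hst : s ≠ t) (hx : starRingEnd ℂ x = x) (hy : starRingEnd ℂ y = y)
    (hω : starRingEnd ℂ ω * ω = 1) (hxy : x * x + y * y = 1) :
    emb s t x (-(starRingEnd ℂ ω) * y) (ω * y) x ∈ Matrix.unitaryGroup (Fin n) ℂ := by
  rw [Matrix.mem_unitaryGroup_iff', star_emb hst, emb_mul hst]
  have e1 : starRingEnd ℂ x * x + starRingEnd ℂ (ω * y) * (ω * y) = 1 := by
    simp only [_root_.map_mul, hx, hy]
    linear_combination y * y * hω + hxy
  have e2 : starRingEnd ℂ x * (-(starRingEnd ℂ ω) * y) + starRingEnd ℂ (ω * y) * x = 0 := by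
    simp only [_root_.map_mul, hx, hy]; ring
  have e3 : starRingEnd ℂ (-(starRingEnd ℂ ω) * y) * x + starRingEnd ℂ x * (ω * y) = 0 := by
    simp only [_root_.map_mul, map_neg, hx, hy, Complex.conj_conj]; ring
  have e4 : starRingEnd ℂ (-(starRingEnd ℂ ω) * y) * (-(starRingEnd ℂ ω) * y)
      + starRingEnd ℂ x * x = 1 := by
    simp only [_root_.map_mul, map_neg, hx, hy, Complex.conj_conj]
    linear_combination y * y * hω + hxy
  rw [e1, e2, e3, e4, emb_one hst]

lemma trace_rot (hst : s ≠ t) (cv : Fin n → ℝ) {B : Matrix (Fin n) (Fin n) ℂ}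
    (hB : B.IsHermitian)
    (hx : starRingEnd ℂ x = x) (hy : starRingEnd ℂ y = y)
    (hω : starRingEnd ℂ ω * ω = 1) (hxy : x * x + y * y = 1) :
    (Matrix.diagonal (fun i => (cv i : ℂ)) *
        (star (emb s t x (-(starRingEnd ℂ ω) * y) (ω * y) x) * B *
          emb s t x (-(starRingEnd ℂ ω) * y) (ω * y) x)).trace
      = (Matrix.diagonal (fun i => (cv i : ℂ)) * B).trace
        + ((cv s : ℂ) - (cv t : ℂ)) *
            (y * y * (B t t - B s s)
              + x * y * (ω * B s t + starRingEnd ℂ (ω * B s t))) := by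
  have hts : B t s = starRingEnd ℂ (B s t) := (hB.apply t s).symm
  rw [star_emb hst, trace_key hst]
  simp only [_root_.map_mul, map_neg, hx, hy, Complex.conj_conj, hts]
  linear_combination ((cv s : ℂ) * B s s + (cv t : ℂ) * B t t) * hxy
    + ((cv s : ℂ) * B t t + (cv t : ℂ) * B s s) * (y * y) * hω

end Part4

namespace Part5

lemma key_analysis {P Q : ℝ}
    (h : ∀ θ : ℝ, Q * Real.sin θ ^ 2 + P * (Real.sin θ * Real.cos θ) ≤ 0) : P = 0 := by
  have h2 : ∀ θ ∈ Set.Ioo (0 : ℝ) (Real.pi / 2),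
      Real.cos θ * |P| ≤ Real.sin θ * (-Q) := by
    intro θ hθ
    have hs : 0 < Real.sin θ :=
      Real.sin_pos_of_pos_of_lt_pi hθ.1 (lt_trans hθ.2 (by linarith [Real.pi_pos]))
    have hc : 0 < Real.cos θ :=
      Real.cos_pos_of_mem_Ioo ⟨by linarith [Real.pi_pos, hθ.1], hθ.2⟩
    have h3 : Real.sin θ * Q + Real.cos θ * P ≤ 0 := by
      have := h θ
      nlinarith [hs]
    have h4 : Real.sin θ * Q - Real.cos θ * P ≤ 0 := by
      have := h (-θ)
      simp only [Real.sin_neg, Real.cos_neg] at this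
      nlinarith [hs]
    rcases abs_cases P with ⟨hP, _⟩ | ⟨hP, _⟩ <;> rw [hP] <;> linarith
  have cont : Filter.Tendsto (fun θ => Real.sin θ * (-Q) - Real.cos θ * |P|)
      (nhdsWithin 0 (Set.Ioi 0)) (nhds (Real.sin 0 * (-Q) - Real.cos 0 * |P|)) := by
    apply Filter.Tendsto.mono_left ?_ nhdsWithin_le_nhds
    exact (Continuous.sub ((Real.continuous_sin).mul continuous_const)
      ((Real.continuous_cos).mul continuous_const)).tendsto 0
  have hev : ∀ᶠ θ in nhdsWithin (0:ℝ) (Set.Ioi 0),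
      0 ≤ Real.sin θ * (-Q) - Real.cos θ * |P| := by
    filter_upwards [Ioo_mem_nhdsGT (half_pos Real.pi_pos)] with θ hθ
    linarith [h2 θ hθ]
  have hlim : (0:ℝ) ≤ Real.sin 0 * (-Q) - Real.cos 0 * |P| := ge_of_tendsto cont hev
  simp only [Real.sin_zero, Real.cos_zero, zero_mul, one_mul, zero_sub] at hlim
  have : |P| ≤ 0 := by linarith
  simpa using le_antisymm this (abs_nonneg P)

end Part5


namespace Part6
open Stmt12Aux Part3

variable {n : ℕ}

lemma herm_diag_real {B : Matrix (Fin n) (Fin n) ℂ} (hB : B.IsHermitian) (i : Fin n) :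
    (((B i i).re : ℂ)) = B i i :=
  Complex.conj_eq_iff_re.mp (hB.apply i i)

lemma trace_real (cv : Fin n → ℝ) {B : Matrix (Fin n) (Fin n) ℂ} (hB : B.IsHermitian) :
    ((((Matrix.diagonal (fun i => (cv i : ℂ)) * B).trace).re : ℂ))
      = (Matrix.diagonal (fun i => (cv i : ℂ)) * B).trace := by
  have h : (Matrix.diagonal (fun i => (cv i : ℂ)) * B).trace
      = ((∑ i, cv i * (B i i).re : ℝ) : ℂ) := by
    rw [trace_diag]
    push_cast
    exact Finset.sum_congr rfl fun i _ => by rw [herm_diag_real hB i]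
  rw [h]
  simp

end Part6

/-- The joint `C`-numerical range of a tuple of Hermitian matrices, regarded as a
subset of `ℝ^m`. -/
noncomputable def jointCNumRangeR {n m : ℕ} (C : Matrix (Fin n) (Fin n) ℂ)
    (A : Fin m → Matrix (Fin n) (Fin n) ℂ) : Set (Fin m → ℝ) :=
  { p | ∃ U ∈ Matrix.unitaryGroup (Fin n) ℂ,
      ∀ j, (p j : ℂ) = (C * (star U * A j * U)).trace }

/-- A point `p` of a set `S ⊆ ℝ^m` is a conical point if there is an invertible affine
transformation `f : ℝ^m → ℝ^m` with `f p = 0` and `f '' S ⊆ (-∞,0]^m`. -/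
def IsConicalPoint {m : ℕ} (S : Set (Fin m → ℝ)) (p : Fin m → ℝ) : Prop :=
  p ∈ S ∧ ∃ f : (Fin m → ℝ) ≃ᵃ[ℝ] (Fin m → ℝ),
    f p = 0 ∧ ∀ x ∈ S, ∀ j, f x j ≤ 0

theorem stmt_12 {n m : ℕ} (hn : 0 < n) (hm : 0 < m)
    (c : Fin n → ℝ) (hc : Antitone c)
    (C : Matrix (Fin n) (Fin n) ℂ)
    (hC : C = Matrix.diagonal fun i => (c i : ℂ))
    (A : Fin m → Matrix (Fin n) (Fin n) ℂ) (hA : ∀ j, (A j).IsHermitian)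
    (U : Matrix (Fin n) (Fin n) ℂ) (hU : U ∈ Matrix.unitaryGroup (Fin n) ℂ)
    (hcp : IsConicalPoint (jointCNumRangeR C A)
      (fun j => ((C * (star U * A j * U)).trace).re)) :
    ∀ j, ∀ s t : Fin n, c s ≠ c t → (star U * A j * U) s t = 0 := by
  subst hC
  intro j s t hcst
  have hst : s ≠ t := fun h => hcst (congrArg c h)
  obtain ⟨hpS, f, hfp, hfS⟩ := hcp
  have hB : ∀ j', (star U * A j' * U).IsHermitian := fun j' => by
    simpa [Matrix.star_eq_conjTranspose] using
      Matrix.isHermitian_conjTranspose_mul_mul U (hA j')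
  have key : ∀ ω : ℂ, starRingEnd ℂ ω * ω = 1 →
      (ω * ((star U * A j * U) s t)).re = 0 := by
    intro ω hω
    set u : Fin m → ℝ := fun j' =>
      ((star U * A j' * U) t t).re - ((star U * A j' * U) s s).re with hu
    set w : Fin m → ℝ := fun j' => 2 * (ω * ((star U * A j' * U) s t)).re with hw
    set δ : ℝ := c s - c t with hδ
    have hδ0 : δ ≠ 0 := sub_ne_zero.mpr hcst
    set p : Fin m → ℝ := fun j' =>
      ((Matrix.diagonal fun i => (c i : ℂ)) * (star U * A j' * U)).trace.re with hp
    have hmem : ∀ θ : ℝ,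
        (fun j' => p j' + δ * (Real.sin θ ^ 2 * u j'
          + Real.sin θ * Real.cos θ * w j'))
        ∈ jointCNumRangeR (Matrix.diagonal fun i => (c i : ℂ)) A := by
      intro θ
      set x : ℂ := (Real.cos θ : ℂ) with hxdef
      set y : ℂ := (Real.sin θ : ℂ) with hydef
      have hx : starRingEnd ℂ x = x := Complex.conj_ofReal _
      have hy : starRingEnd ℂ y = y := Complex.conj_ofReal _
      have hxy : x * x + y * y = 1 := by
        have h0 : Real.cos θ * Real.cos θ + Real.sin θ * Real.sin θ = 1 := by
          nlinarith [Real.sin_sq_add_cos_sq θ]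
        rw [hxdef, hydef]
        exact_mod_cast h0
      refine ⟨U * Stmt12Aux.emb s t x (-(starRingEnd ℂ ω) * y) (ω * y) x,
        mul_mem hU (Part4.rot_unitary hst hx hy hω hxy), ?_⟩
      intro j'
      have hconj : star (U * Stmt12Aux.emb s t x (-(starRingEnd ℂ ω) * y) (ω * y) x)
            * A j' * (U * Stmt12Aux.emb s t x (-(starRingEnd ℂ ω) * y) (ω * y) x)
          = star (Stmt12Aux.emb s t x (-(starRingEnd ℂ ω) * y) (ω * y) x)
            * (star U * A j' * U)
            * Stmt12Aux.emb s t x (-(starRingEnd ℂ ω) * y) (ω * y) x := by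
        rw [StarMul.star_mul]
        simp only [Matrix.mul_assoc]
      rw [hconj, Part4.trace_rot hst c (hB j') hx hy hω hxy]
      have hre := Part6.trace_real c (hB j')
      have huc : ((u j' : ℝ) : ℂ)
          = (star U * A j' * U) t t - (star U * A j' * U) s s := by
        rw [hu]
        push_cast
        rw [Part6.herm_diag_real (hB j') t, Part6.herm_diag_real (hB j') s]
      have hwc : ((w j' : ℝ) : ℂ)
          = ω * (star U * A j' * U) s t
            + starRingEnd ℂ (ω * (star U * A j' * U) s t) := by
        rw [hw, Complex.add_conj]
      rw [hp]
      push_cast [-Complex.ofReal_sin, -Complex.ofReal_cos]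
      rw [hre, huc, hwc, Complex.ofReal_sub]
      ring
    -- inequalities from conical point
    have hineq : ∀ θ : ℝ, ∀ k,
        (δ * Real.sin θ ^ 2) * f.linear u k
          + (δ * (Real.sin θ * Real.cos θ)) * f.linear w k ≤ 0 := by
      intro θ k
      have hxv : (fun j' => p j' + δ * (Real.sin θ ^ 2 * u j'
            + Real.sin θ * Real.cos θ * w j'))
          = ((δ * Real.sin θ ^ 2) • u + (δ * (Real.sin θ * Real.cos θ)) • w) +ᵥ p := by
        funext j'
        simp only [Pi.vadd_apply, Pi.add_apply, Pi.smul_apply, smul_eq_mul, vadd_eq_add]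
        ring
      have h0 := hfS _ (hmem θ) k
      rw [hxv, AffineEquiv.map_vadd, hfp] at h0
      simpa [map_add, _root_.map_smul] using h0
    have hLw : ∀ k, f.linear w k = 0 := by
      intro k
      have hP : δ * f.linear w k = 0 := by
        apply Part5.key_analysis (Q := δ * f.linear u k)
        intro θ
        calc (δ * f.linear u k) * Real.sin θ ^ 2
              + (δ * f.linear w k) * (Real.sin θ * Real.cos θ)
            = (δ * Real.sin θ ^ 2) * f.linear u k
              + (δ * (Real.sin θ * Real.cos θ)) * f.linear w k := by ring
          _ ≤ 0 := hineq θ k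
      exact (mul_eq_zero.mp hP).resolve_left hδ0
    have hw0 : w = 0 := by
      have h0 : f.linear w = 0 := funext hLw
      have := f.linear.injective (a₁ := w) (a₂ := 0) (by rw [h0]; simp)
      exact this
    have := congrFun hw0 j
    rw [hw] at this
    simp only [Pi.zero_apply] at this
    linarith
  have h1 := key 1 (by simp)
  have h2 := key Complex.I (by simp [Complex.conj_I, Complex.I_mul_I])
  simp only [one_mul] at h1
  have h2' : ((star U * A j * U) s t).im = 0 := by
    simp only [Complex.mul_re, Complex.I_re, Complex.I_im] at h2
    linarith
  exact Complex.ext h1 h2'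
end

section
/- Suppose C ∈ M_n is a Hermitian matrix with n distinct eigenvalues, and let A_1, …, A_m ∈ M_n. If W_C(A_1, …, A_m) has a conical point, then {A_1, …, A_m} is a commuting family of normal matrices. -/
/-!
Let `p` be a conical point, attained at the unitary `U`, and put `B j = U⋆ A j U`. For a
skew-Hermitian `H`, the curve `t ↦ U exp (t H)` of unitaries gives a curve in `W_C(A)` through
`p`; after the affine map all `2m` real coordinates of this curve are maximal at `t = 0`, so its
velocity `(tr (C (B j H - H B j)))_j` vanishes. Hence `tr ((C B j - B j C) H) = 0` for every
skew-Hermitian `H`, i.e. each `B j` commutes with `C`, and so does each `B j⋆`. As `C` has distinct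
eigenvalues, its commutant consists of matrices diagonal in an eigenbasis of `C`, so it is
commutative: the `B j`, and with them the `A j`, are commuting normal matrices.
-/

open Matrix

/-- A point `p` of a set `S ⊆ ℂ^m`, identified with a subset of `ℝ^{2m}`, is a conical
point if there is an invertible real-affine transformation `f` of `ℂ^m` with `f p = 0`
and all `2m` real coordinates of the image `f '' S` nonpositive. -/
def IsConicalPointC {m : ℕ} (S : Set (Fin m → ℂ)) (p : Fin m → ℂ) : Prop :=
  p ∈ S ∧ ∃ f : (Fin m → ℂ) ≃ᵃ[ℝ] (Fin m → ℂ),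
    f p = 0 ∧ ∀ x ∈ S, ∀ j, (f x j).re ≤ 0 ∧ (f x j).im ≤ 0

namespace Matrix

variable {ι : Type*} [Fintype ι]

open scoped ComplexOrder in
theorem eq_zero_of_forall_skewAdjoint_trace_mul_eq_zero {K : Matrix ι ι ℂ}
    (h : ∀ H ∈ skewAdjoint (Matrix ι ι ℂ), (K * H).trace = 0) : K = 0 := by
  -- `Kᴴ = (Kᴴ - K) / 2 - I • (I • (Kᴴ + K)) / 2` is a combination of skew-adjoint
  -- matrices, so `tr (K Kᴴ) = 0`.
  have h₁ := h (Kᴴ - K) <| by simp [skewAdjoint.mem_iff, star_eq_conjTranspose]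
  have h₂ := h (Complex.I • (Kᴴ + K)) <|
    (IsSelfAdjoint.star_add_self K).smul_mem_skewAdjoint
      (skewAdjoint.mem_iff.mpr Complex.conj_I)
  rw [mul_sub, trace_sub] at h₁
  rw [Matrix.mul_smul, trace_smul, mul_add, trace_add, smul_eq_mul] at h₂
  rw [← trace_mul_conjTranspose_self_eq_zero_iff]
  linear_combination (h₁ - Complex.I * h₂ + ((K * Kᴴ).trace + (K * K).trace) * Complex.I_sq) / 2

variable [DecidableEq ι] {R : Type*} [CommRing R] [NoZeroDivisors R]

theorem eq_diagonal_diag_of_commute_diagonal {d : ι → R} (hd : Function.Injective d)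
    {X : Matrix ι ι R} (hX : Commute X (diagonal d)) : X = diagonal X.diag := by
  ext i j
  obtain rfl | hij := eq_or_ne i j
  · simp
  · have h := congr_fun₂ hX.eq i j
    rw [mul_diagonal, diagonal_mul] at h
    have : X i j * (d j - d i) = 0 := by linear_combination h
    simpa [diagonal_apply_ne _ hij, sub_eq_zero, hd.ne hij.symm] using this

theorem commute_of_commute_diagonal {d : ι → R} (hd : Function.Injective d)
    {X Y : Matrix ι ι R} (hX : Commute X (diagonal d)) (hY : Commute Y (diagonal d)) :
    Commute X Y := by
  rw [eq_diagonal_diag_of_commute_diagonal hd hX, eq_diagonal_diag_of_commute_diagonal hd hY]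
  exact commute_diagonal _ _

theorem IsHermitian.commute_of_commute {𝕜 : Type*} [RCLike 𝕜] {C X Y : Matrix ι ι 𝕜}
    (hC : C.IsHermitian) (hdist : Function.Injective hC.eigenvalues)
    (hX : Commute X C) (hY : Commute Y C) : Commute X Y := by
  let φ := Unitary.conjStarAlgAut 𝕜 (Matrix ι ι 𝕜) hC.eigenvectorUnitary
  have hd : Function.Injective (RCLike.ofReal ∘ hC.eigenvalues : ι → 𝕜) :=
    RCLike.ofReal_injective.comp hdist
  have hCφ : φ.symm C = diagonal (RCLike.ofReal ∘ hC.eigenvalues) :=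
    φ.symm_apply_eq.mpr hC.spectral_theorem
  have := (commute_of_commute_diagonal hd (hCφ ▸ hX.map φ.symm) (hCφ ▸ hY.map φ.symm)).map φ
  rwa [φ.apply_symm_apply, φ.apply_symm_apply] at this

end Matrix

theorem IsConicalPointC.hasDerivAt_eq_zero {m : ℕ} {S : Set (Fin m → ℂ)} {p : Fin m → ℂ}
    (hp : IsConicalPointC S p) {γ : ℝ → Fin m → ℂ} {v : Fin m → ℂ} (hγS : ∀ t, γ t ∈ S)
    (hγp : γ 0 = p) (hγ : HasDerivAt γ v 0) : v = 0 := by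
  obtain ⟨-, f, hfp, hf⟩ := hp
  let L : (Fin m → ℂ) →L[ℝ] (Fin m → ℂ) := LinearMap.toContinuousLinearMap f.linear
  have hfγ : (fun t => f (γ t)) = fun t => L (γ t - p) := by
    ext1 t
    simpa [L, hfp] using (f.toAffineMap.linearMap_vsub (γ t) p).symm
  have hd : HasDerivAt (fun t => f (γ t)) (L v) 0 :=
    hfγ ▸ L.hasFDerivAt.comp_hasDerivAt 0 (hγ.sub_const p)
  have hderiv_zero : ∀ j (φ : ℂ →L[ℝ] ℝ), (∀ x ∈ S, φ (f x j) ≤ 0) → φ (L v j) = 0 := by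
    intro j φ hφ
    refine IsLocalMax.hasDerivAt_eq_zero (f := fun t => φ (f (γ t) j)) ?_
      (φ.hasFDerivAt.comp_hasDerivAt 0 (hasDerivAt_pi.1 hd j))
    refine Filter.Eventually.of_forall fun t => ?_
    simpa [hγp, hfp] using hφ _ (hγS t)
  have hLv : L v = 0 := funext fun j => Complex.ext
    (hderiv_zero j Complex.reCLM fun x hx => (hf x hx j).1)
    (hderiv_zero j Complex.imCLM fun x hx => (hf x hx j).2)
  exact f.linear.injective (by simpa [L] using hLv)

section UnitaryOrbit

open NormedSpace

open scoped Matrix.Norms.L2Operator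

variable {ι : Type*} [Fintype ι] [DecidableEq ι]

theorem Matrix.exp_smul_mem_unitaryGroup {H : Matrix ι ι ℂ} (hH : H ∈ skewAdjoint _) (t : ℝ) :
    exp (t • H) ∈ unitaryGroup ι ℂ :=
  letI : NormedAlgebra ℚ (Matrix ι ι ℂ) := .restrictScalars ℚ ℂ _
  exp_mem_unitary_of_mem_skewAdjoint (skewAdjoint.smul_mem t hH)

theorem Matrix.hasDerivAt_trace_mul_conj_exp (C X : Matrix ι ι ℂ) {H : Matrix ι ι ℂ}
    (hH : H ∈ skewAdjoint _) :
    HasDerivAt (fun t : ℝ => (C * (star (exp (t • H)) * X * exp (t • H))).trace)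
      (C * (X * H - H * X)).trace 0 := by
  have hexp : ∀ K : Matrix ι ι ℂ, HasDerivAt (fun t : ℝ => exp (t • K)) K 0 := fun K => by
    simpa using hasDerivAt_exp_smul_const (𝕂 := ℝ) K 0
  have hstar : (fun t : ℝ => star (exp (t • H))) = fun t => exp (t • -H) := by
    ext1 t
    rw [star_exp, star_smul, skewAdjoint.mem_iff.mp hH, star_trivial]
  have hconj : HasDerivAt (fun t : ℝ => C * (star (exp (t • H)) * X * exp (t • H)))
      (C * (X * H - H * X)) 0 := by
    have := (((hstar ▸ hexp (-H)).mul_const X).mul (hexp H)).const_mul C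
    simp only [zero_smul, exp_zero, star_one, Matrix.mul_one] at this
    exact this.congr_deriv (by noncomm_ring)
  exact (traceLinearMap ι ℝ ℂ).toContinuousLinearMap.hasFDerivAt.comp_hasDerivAt 0 hconj

theorem IsConicalPointC.commute_conj {n m : ℕ} {C : Matrix (Fin n) (Fin n) ℂ}
    {A : Fin m → Matrix (Fin n) (Fin n) ℂ} {p : Fin m → ℂ}
    (hp : IsConicalPointC (jointCNumRange C A) p) {U : Matrix (Fin n) (Fin n) ℂ}
    (hU : U ∈ unitaryGroup (Fin n) ℂ) (hpU : ∀ j, p j = (C * (star U * A j * U)).trace)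
    (j : Fin m) :
    Commute (star U * A j * U) C := by
  set B := fun j => star U * A j * U
  suffices ∀ H ∈ skewAdjoint (Matrix (Fin n) (Fin n) ℂ), ((C * B j - B j * C) * H).trace = 0 from
    (sub_eq_zero.mp (Matrix.eq_zero_of_forall_skewAdjoint_trace_mul_eq_zero this)).symm
  intro H hH
  have hderiv := hp.hasDerivAt_eq_zero
    (γ := fun t j => (C * (star (exp (t • H)) * B j * exp (t • H))).trace)
    (fun t => ⟨U * exp (t • H), mul_mem hU (Matrix.exp_smul_mem_unitaryGroup hH t),
      fun j => by simp [B, star_mul, Matrix.mul_assoc]⟩)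
    (by ext j; simp [B, hpU])
    (hasDerivAt_pi.2 fun j => Matrix.hasDerivAt_trace_mul_conj_exp C (B j) hH)
  calc ((C * B j - B j * C) * H).trace = (C * (B j * H - H * B j)).trace := by
        rw [Matrix.sub_mul, Matrix.mul_sub, trace_sub, trace_sub, Matrix.mul_assoc (B j),
          trace_mul_comm (B j), Matrix.mul_assoc C, Matrix.mul_assoc C]
    _ = 0 := congr_fun hderiv j

end UnitaryOrbit

theorem stmt_13_general {n m : ℕ}
    (C : Matrix (Fin n) (Fin n) ℂ) (hC : C.IsHermitian)
    (hdist : Function.Injective hC.eigenvalues)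
    (A : Fin m → Matrix (Fin n) (Fin n) ℂ)
    (hcp : ∃ p, IsConicalPointC (jointCNumRange C A) p) :
    (∀ i, A i * (A i)ᴴ = (A i)ᴴ * A i) ∧ (∀ i j, A i * A j = A j * A i) := by
  obtain ⟨p, hp⟩ := hcp
  obtain ⟨U, hU, hpU⟩ := hp.1
  let φ := Unitary.conjStarAlgAut ℂ (Matrix (Fin n) (Fin n) ℂ) ⟨U, hU⟩
  have hB : ∀ j, Commute (φ.symm (A j)) C := hp.commute_conj hU hpU
  have hBstar : ∀ j, Commute (star (φ.symm (A j))) C := fun j => by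
    simpa [star_eq_conjTranspose, hC.eq] using (hB j).star_star
  refine ⟨fun i => ?_, fun i j => ?_⟩
  · have := (hC.commute_of_commute hdist (hB i) (hBstar i)).map φ
    rw [map_star, φ.apply_symm_apply, star_eq_conjTranspose] at this
    exact this.eq
  · simpa using ((hC.commute_of_commute hdist (hB i) (hB j)).map φ).eq

theorem stmt_13 {n m : ℕ} (hn : 0 < n) (hm : 0 < m)
    (C : Matrix (Fin n) (Fin n) ℂ) (hC : C.IsHermitian)
    (hdist : Function.Injective hC.eigenvalues)
    (A : Fin m → Matrix (Fin n) (Fin n) ℂ)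
    (hcp : ∃ p, IsConicalPointC (jointCNumRange C A) p) :
    (∀ i, A i * (A i)ᴴ = (A i)ᴴ * A i) ∧ (∀ i j, A i * A j = A j * A i) :=
  stmt_13_general C hC hdist A hcp
end

section
/- Suppose A_1, …, A_m ∈ M_n are Hermitian matrices such that A_j = A_{j1} ⊕ … ⊕ A_{jr} ∈ M_{n_1} ⊕ … ⊕ M_{n_r} for each j, where n_1 + … + n_r = n. Let k be an integer with 1 ≤ k ≤ n−1 and let 𝓦 = ⋃ {W_{k_1}(A_{11}, …, A_{m1}) + … + W_{k_r}(A_{1r}, …, A_{mr}) : k_1, …, k_r ≥ 0 integers with Σ_{j=1}^r k_j = k}, with the convention that W_0(B_1, …, B_q) = {(0, …, 0)} for any matrices B_1, …, B_q, and where + denotes Minkowski sum. Then W_k(A_1, …, A_m) ⊆ conv 𝓦 = conv W_k(A_1, …, A_m). -/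
/-! The diagonal blocks `Pᵢ` of a rank-`k` projection `P` satisfy `0 ≤ Pᵢ ≤ 1`, so after
diagonalizing each block by a unitary `Uᵢ`, the point `(tr (Aⱼ P))ⱼ = (∑ᵢ tr (Aⱼᵢ Pᵢ))ⱼ` is the
image, under a linear map, of the vector of eigenvalues of the blocks. That vector lies in the
hypersimplex `{x ∈ [0,1]^n | ∑ x = k}`, whose extreme points are the `0/1`-vectors with `k` ones
(a point with a fractional coordinate has a second one, since `∑ x` is an integer, and can be
moved along the difference of the two coordinates). The image of the `0/1`-vector of a set `S`
is realized by the block-diagonal projection onto the columns of the `Uᵢ` indexed by `S`, a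
point of `𝓦`. Conversely every point of `𝓦` comes from a block-diagonal rank-`k` projection. -/

open Matrix

/-- The joint `k`-numerical range of a tuple of Hermitian matrices, regarded as a
subset of `ℝ^m`:
`W_k(A_1, …, A_m) = {(tr(A₁P), …, tr(AₘP)) : P an orthogonal projection of rank k}`.
(For `k = 0` this is the singleton `{0}`, matching the convention `W₀ = {(0,…,0)}`.) -/
noncomputable def jointKNumRangeR {ι : Type*} [Fintype ι] [DecidableEq ι] {m : ℕ}
    (k : ℕ) (A : Fin m → Matrix ι ι ℂ) : Set (Fin m → ℝ) :=
  { p | ∃ P : Matrix ι ι ℂ, P.IsHermitian ∧ P * P = P ∧ P.rank = k ∧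
      ∀ j, (p j : ℂ) = (A j * P).trace }

open scoped ComplexOrder

section Hypersimplex

variable {ι : Type*} [Fintype ι]

def hypersimplex (k : ℕ) : Set (ι → ℝ) :=
  Set.univ.pi (fun _ => Set.Icc 0 1) ∩ {x | ∑ t, x t = k}

def hypersimplexVertices (k : ℕ) : Set (ι → ℝ) :=
  (fun S : Finset ι => (S : Set ι).indicator 1) '' {S | S.card = k}

lemma convex_hypersimplex (k : ℕ) : Convex ℝ (hypersimplex (ι := ι) k) :=
  (convex_pi fun _ _ => convex_Icc 0 1).inter <|
    convex_hyperplane (f := fun x : ι → ℝ => ∑ t, x t)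
      ⟨fun _ _ => Finset.sum_add_distrib, fun _ _ => (Finset.mul_sum _ _ _).symm⟩ _

lemma isCompact_hypersimplex (k : ℕ) : IsCompact (hypersimplex (ι := ι) k) :=
  (isCompact_univ_pi fun _ => isCompact_Icc).inter_right <|
    isClosed_eq (continuous_finsetSum _ fun t _ => continuous_apply t) continuous_const

lemma hypersimplexVertices_finite (k : ℕ) : (hypersimplexVertices (ι := ι) k).Finite :=
  (Set.toFinite _).image _

variable [DecidableEq ι] {k : ℕ} {x : ι → ℝ}

lemma eq_zero_or_eq_one_of_mem_Icc_of_notMem_Ioo {a : ℝ} (h : a ∈ Set.Icc 0 1)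
    (h' : a ∉ Set.Ioo 0 1) : a = 0 ∨ a = 1 := by
  by_contra! hne
  exact h' ⟨h.1.lt_of_ne hne.1.symm, h.2.lt_of_ne hne.2⟩

lemma exists_ne_mem_Ioo_of_mem_hypersimplex (hx : x ∈ hypersimplex k) {t : ι}
    (ht : x t ∈ Set.Ioo 0 1) : ∃ s ≠ t, x s ∈ Set.Ioo 0 1 := by
  by_contra! h
  set n := ((Finset.univ.erase t).filter fun s => x s = 1).card
  have hrest : ∑ s ∈ Finset.univ.erase t, x s = n := by
    rw [← Finset.sum_boole]
    refine Finset.sum_congr rfl fun s hs => ?_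
    rcases eq_zero_or_eq_one_of_mem_Icc_of_notMem_Ioo (hx.1 s trivial)
      (h s (Finset.ne_of_mem_erase hs)) with h0 | h1 <;> simp [*]
  have hsum : x t + n = k := by
    rw [← hrest, Finset.add_sum_erase _ _ (Finset.mem_univ t), hx.2]
  have hlt : n < k := by exact_mod_cast (by linarith [ht.1] : (n : ℝ) < k)
  have hgt : k < n + 1 := by exact_mod_cast (by linarith [ht.2] : (k : ℝ) < n + 1)
  omega

lemma add_single_sub_single_mem_hypersimplex (hx : x ∈ hypersimplex k) {t s : ι} (hts : t ≠ s)
    {c : ℝ} (ht : x t + c ∈ Set.Icc 0 1) (hs : x s - c ∈ Set.Icc 0 1) :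
    x + Pi.single t c - Pi.single s c ∈ hypersimplex k := by
  refine ⟨fun u _ => ?_, ?_⟩
  · by_cases hut : u = t
    · subst hut; simpa [hts] using ht
    · by_cases hus : u = s
      · subst hus; simpa [hut] using hs
      · simpa [hut, hus] using hx.1 u trivial
  · simpa [Finset.sum_sub_distrib, Finset.sum_add_distrib] using hx.2

lemma notMem_extremePoints_hypersimplex (hx : x ∈ hypersimplex k) {t : ι}
    (ht : x t ∈ Set.Ioo 0 1) : x ∉ Set.extremePoints ℝ (hypersimplex k) := by
  obtain ⟨s, hst, hs⟩ := exists_ne_mem_Ioo_of_mem_hypersimplex hx ht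
  set ε := min (min (x t) (1 - x t)) (min (x s) (1 - x s))
  have hε : 0 < ε := by
    simp only [ε, lt_min_iff, sub_pos]
    exact ⟨⟨ht.1, ht.2⟩, hs.1, hs.2⟩
  have hεt : ε ≤ x t ∧ ε ≤ 1 - x t := ⟨by simp [ε], by simp [ε]⟩
  have hεs : ε ≤ x s ∧ ε ≤ 1 - x s := ⟨by simp [ε], by simp [ε]⟩
  have hup := add_single_sub_single_mem_hypersimplex hx hst.symm (c := ε)
    ⟨by linarith, by linarith⟩ ⟨by linarith, by linarith⟩
  have hdown := add_single_sub_single_mem_hypersimplex hx hst.symm (c := -ε)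
    ⟨by linarith, by linarith⟩ ⟨by linarith, by linarith⟩
  intro hext
  have hmid : x ∈ openSegment ℝ (x + Pi.single t ε - Pi.single s ε)
      (x + Pi.single t (-ε) - Pi.single s (-ε)) :=
    ⟨1 / 2, 1 / 2, by norm_num, by norm_num, by norm_num, by
      ext u; simp only [Pi.add_apply, Pi.sub_apply, Pi.smul_apply, Pi.single_neg, Pi.neg_apply,
        smul_eq_mul]; ring⟩
  have := congr_fun ((mem_extremePoints.1 hext).2 _ hup _ hdown hmid).1 t
  simp [hst.symm] at this
  linarith

lemma extremePoints_hypersimplex_subset :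
    Set.extremePoints ℝ (hypersimplex k) ⊆ hypersimplexVertices (ι := ι) k := by
  intro x hext
  have hx := hext.1
  have h01 : ∀ t, x t = 0 ∨ x t = 1 := fun t =>
    eq_zero_or_eq_one_of_mem_Icc_of_notMem_Ioo (hx.1 t trivial)
      fun ht => notMem_extremePoints_hypersimplex hx ht hext
  have hind : ((Finset.univ.filter fun t => x t = 1 : Finset ι) : Set ι).indicator 1 = x := by
    ext t; rcases h01 t with h | h <;> simp [h]
  refine ⟨_, ?_, hind⟩
  have : (((Finset.univ.filter fun t => x t = 1).card : ℕ) : ℝ) = k := by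
    rw [← hx.2, ← hind]; simp [Set.indicator_apply, Finset.sum_boole]
  exact_mod_cast this

theorem hypersimplex_subset_convexHull (k : ℕ) :
    hypersimplex k ⊆ convexHull ℝ (hypersimplexVertices (ι := ι) k) := by
  rw [← closure_convexHull_extremePoints (isCompact_hypersimplex k) (convex_hypersimplex k)]
  exact ((hypersimplexVertices_finite k).isCompact_convexHull ℝ).isClosed.closure_subset_iff.2
    (convexHull_mono extremePoints_hypersimplex_subset)

end Hypersimplex

namespace Matrix

variable {n : Type*} [Fintype n]

lemma IsHermitian.posSemidef_of_isIdempotentElem {𝕜 : Type*} [RCLike 𝕜] {P : Matrix n n 𝕜}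
    (hH : P.IsHermitian) (hP : IsIdempotentElem P) : P.PosSemidef := by
  simpa [hH.eq, hP.eq] using posSemidef_conjTranspose_mul_self P

variable [DecidableEq n]

theorem trace_eq_rank_of_isIdempotentElem {K : Type*} [Field K] {P : Matrix n n K}
    (hP : IsIdempotentElem P) : P.trace = P.rank := by
  have he : IsIdempotentElem (toLin' P) := hP.map (Matrix.toLinAlgEquiv' (R := K))
  rw [Matrix.rank, ← Matrix.toLin'_apply', ← (LinearMap.IsIdempotentElem.isProj_range _ he).trace,
    LinearMap.trace_eq_matrix_trace K (Pi.basisFun K n), LinearMap.toMatrix_eq_toMatrix',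
    LinearMap.toMatrix'_toLin']

lemma IsHermitian.eigenvalues_mem_Icc {𝕜 : Type*} [RCLike 𝕜] {B : Matrix n n 𝕜}
    (hB : B.IsHermitian) (h0 : B.PosSemidef) (h1 : (1 - B).PosSemidef) (l : n) :
    hB.eigenvalues l ∈ Set.Icc 0 1 := by
  refine ⟨h0.eigenvalues_nonneg l, ?_⟩
  have hv := h1.re_dotProduct_nonneg (hB.eigenvectorBasis l)
  have hunit : RCLike.re (star ⇑(hB.eigenvectorBasis l) ⬝ᵥ ⇑(hB.eigenvectorBasis l)) = 1 := by
    rw [dotProduct_comm, ← EuclideanSpace.inner_eq_star_dotProduct, inner_self_eq_norm_sq,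
      hB.eigenvectorBasis.orthonormal.1 l, one_pow]
  rw [sub_mulVec, one_mulVec, dotProduct_sub, map_sub, hunit, ← hB.eigenvalues_eq] at hv
  linarith

lemma trace_mul_mul_diagonal_mul {R : Type*} [CommSemiring R] (A U V : Matrix n n R) (d : n → R) :
    (A * (U * diagonal d * V)).trace = ∑ l, (V * A * U) l l * d l := by
  rw [← Matrix.mul_assoc, ← Matrix.mul_assoc, trace_mul_comm, ← Matrix.mul_assoc,
    ← Matrix.mul_assoc]
  simp [Matrix.trace, mul_diagonal]

lemma IsHermitian.re_trace_mul (A : Matrix n n ℂ) {B : Matrix n n ℂ} (hB : B.IsHermitian) :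
    (A * B).trace.re = ∑ l, hB.eigenvalues l *
      ((star (hB.eigenvectorUnitary : Matrix n n ℂ) * A * hB.eigenvectorUnitary) l l).re := by
  conv_lhs => rw [hB.spectral_theorem, Unitary.conjStarAlgAut_apply]
  simp [trace_mul_mul_diagonal_mul, Complex.re_sum, mul_comm]

end Matrix

section Compression

variable {n : Type*} [Fintype n] [DecidableEq n]

lemma sum_diag_conj_mem_jointKNumRangeR {m : ℕ} {A : Fin m → Matrix n n ℂ}
    (hA : ∀ j, (A j).IsHermitian) {U : Matrix n n ℂ} (hU : U ∈ unitaryGroup n ℂ) (S : Finset n) :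
    (fun j => ∑ l ∈ S, ((star U * A j * U) l l).re) ∈ jointKNumRangeR S.card A := by
  set d : n → ℂ := fun l => if l ∈ S then 1 else 0
  have hdd : diagonal d * diagonal d = diagonal d := by
    rw [diagonal_mul_diagonal]; congr 1; ext l; simp only [d]; split_ifs <;> simp
  have hQ : IsIdempotentElem (U * diagonal d * star U) := by
    rw [IsIdempotentElem, Matrix.mul_assoc, ← Matrix.mul_assoc (star U),
      ← Matrix.mul_assoc (star U), mem_unitaryGroup_iff'.1 hU, Matrix.one_mul, ← Matrix.mul_assoc,
      Matrix.mul_assoc U, hdd]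
  have htr : (U * diagonal d * star U).trace = S.card := by
    rw [trace_mul_cycle, mem_unitaryGroup_iff'.1 hU, Matrix.one_mul, trace_diagonal]
    simp [d]
  refine ⟨U * diagonal d * star U, ?_, hQ, ?_, fun j => ?_⟩
  · rw [star_eq_conjTranspose]
    exact isHermitian_mul_mul_conjTranspose U <| isHermitian_diagonal_iff.2 fun l => by
      simp only [d]; split_ifs; exacts [.one _, .zero _]
  · exact_mod_cast (trace_eq_rank_of_isIdempotentElem hQ).symm.trans htr
  · rw [trace_mul_mul_diagonal_mul, Complex.ofReal_sum]
    simp only [d, mul_ite, mul_one, mul_zero, Finset.sum_ite_mem, Finset.univ_inter]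
    refine Finset.sum_congr rfl fun l _ => ?_
    rw [star_eq_conjTranspose]
    exact (isHermitian_conjTranspose_mul_mul U (hA j)).coe_re_apply_self l

end Compression

section BlockDiagonal

variable {o : Type*} [Fintype o] [DecidableEq o] {n' : o → Type*} [∀ i, Fintype (n' i)]

lemma Matrix.trace_blockDiagonal'_mul {R : Type*} [CommSemiring R]
    (M : ∀ i, Matrix (n' i) (n' i) R) (N : Matrix (Σ i, n' i) (Σ i, n' i) R) :
    (blockDiagonal' M * N).trace = ∑ i, (M i * N.submatrix (Sigma.mk i) (Sigma.mk i)).trace := by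
  simp only [Matrix.trace, diag_apply, mul_apply, Fintype.sum_sigma, submatrix_apply]
  refine Fintype.sum_congr _ _ fun i => Fintype.sum_congr _ _ fun l => ?_
  rw [Fintype.sum_eq_single i fun i' hi' => Fintype.sum_eq_zero _ fun l' => by
    rw [blockDiagonal'_apply_ne _ _ _ hi'.symm, zero_mul]]
  simp [blockDiagonal'_apply_eq]

variable [∀ i, DecidableEq (n' i)] {m : ℕ}

lemma Matrix.trace_eq_sum_trace_submatrix_sigmaMk {R : Type*} [CommSemiring R]
    (N : Matrix (Σ i, n' i) (Σ i, n' i) R) :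
    N.trace = ∑ i, (N.submatrix (Sigma.mk i) (Sigma.mk i)).trace := by
  simpa using trace_blockDiagonal'_mul 1 N

/-- The set `𝓦`. -/
def sumJointKNumRange (k : ℕ) (Ablk : Fin m → ∀ i, Matrix (n' i) (n' i) ℂ) : Set (Fin m → ℝ) :=
  ⋃ κ ∈ {κ : o → ℕ | ∑ i, κ i = k},
    {p | ∃ q : o → Fin m → ℝ, (∀ i, q i ∈ jointKNumRangeR (κ i) fun j => Ablk j i) ∧ p = ∑ i, q i}

lemma sumJointKNumRange_subset_jointKNumRangeR (k : ℕ)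
    (Ablk : Fin m → ∀ i, Matrix (n' i) (n' i) ℂ) :
    sumJointKNumRange k Ablk ⊆ jointKNumRangeR k fun j => blockDiagonal' (Ablk j) := by
  intro p hp
  simp only [sumJointKNumRange, Set.mem_iUnion, Set.mem_ofPred_eq] at hp
  obtain ⟨κ, hκ, q, hq, rfl⟩ := hp
  choose P hH hP hrank htr using hq
  have hPP : IsIdempotentElem (blockDiagonal' P) := by
    rw [IsIdempotentElem, ← blockDiagonal'_mul]; exact congrArg _ (funext hP)
  refine ⟨blockDiagonal' P, ?_, hPP, ?_, fun j => ?_⟩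
  · exact (blockDiagonal'_conjTranspose P).trans (congrArg _ (funext fun i => (hH i).eq))
  · have hrank' : ((blockDiagonal' P).rank : ℂ) = k := by
      rw [← hκ, Nat.cast_sum, ← trace_eq_rank_of_isIdempotentElem hPP, trace_blockDiagonal']
      exact Finset.sum_congr rfl fun i _ => by
        rw [trace_eq_rank_of_isIdempotentElem (hP i), hrank i]
    exact_mod_cast hrank'
  · have hblock : ∀ i, (blockDiagonal' P).submatrix (Sigma.mk i) (Sigma.mk i) = P i := fun i => by
      ext; simp [blockDiagonal'_apply_eq]
    simp only [trace_blockDiagonal'_mul, hblock, ← htr, Finset.sum_apply, Complex.ofReal_sum]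

noncomputable def blockEigenvalues {P : Matrix (Σ i, n' i) (Σ i, n' i) ℂ} (hH : P.IsHermitian) :
    (Σ i, n' i) → ℝ :=
  fun t => (hH.submatrix (Sigma.mk t.1)).eigenvalues t.2

lemma blockEigenvalues_mem_hypersimplex {P : Matrix (Σ i, n' i) (Σ i, n' i) ℂ}
    (hH : P.IsHermitian) (hP : IsIdempotentElem P) : blockEigenvalues hH ∈ hypersimplex P.rank := by
  refine ⟨fun t _ => ?_, ?_⟩
  · refine IsHermitian.eigenvalues_mem_Icc _
      ((hH.posSemidef_of_isIdempotentElem hP).submatrix _) ?_ _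
    have h := ((isHermitian_one.sub hH).posSemidef_of_isIdempotentElem hP.one_sub).submatrix
      (Sigma.mk t.1)
    rwa [submatrix_sub, Pi.sub_apply, Pi.sub_apply, submatrix_one _ sigma_mk_injective] at h
  · have h : ((∑ t, blockEigenvalues hH t : ℝ) : ℂ) = P.rank := by
      rw [← trace_eq_rank_of_isIdempotentElem hP, trace_eq_sum_trace_submatrix_sigmaMk,
        Complex.ofReal_sum, Fintype.sum_sigma]
      exact Finset.sum_congr rfl fun i _ =>
        (hH.submatrix (Sigma.mk i)).trace_eq_sum_eigenvalues.symm
    exact_mod_cast h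

def blockConjDiag (Ablk : Fin m → ∀ i, Matrix (n' i) (n' i) ℂ) (U : ∀ i, Matrix (n' i) (n' i) ℂ) :
    (Σ i, n' i) → Fin m → ℝ :=
  fun t j => ((star (U t.1) * Ablk j t.1 * U t.1) t.2 t.2).re

lemma linearCombination_blockConjDiag_indicator_mem_sumJointKNumRange
    {Ablk : Fin m → ∀ i, Matrix (n' i) (n' i) ℂ} (hHerm : ∀ j i, (Ablk j i).IsHermitian)
    {U : ∀ i, Matrix (n' i) (n' i) ℂ} (hU : ∀ i, U i ∈ unitaryGroup (n' i) ℂ)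
    (S : Finset (Σ i, n' i)) :
    Fintype.linearCombination ℝ (blockConjDiag Ablk U) ((S : Set (Σ i, n' i)).indicator 1) ∈
      sumJointKNumRange S.card Ablk := by
  set fiber : ∀ i, Finset (n' i) := fun i => Finset.univ.filter fun l => ⟨i, l⟩ ∈ S
  simp only [sumJointKNumRange, Set.mem_iUnion, Set.mem_ofPred_eq]
  refine ⟨fun i => (fiber i).card, ?_, fun i j => ∑ l ∈ fiber i, blockConjDiag Ablk U ⟨i, l⟩ j,
    fun i => sum_diag_conj_mem_jointKNumRangeR (fun j => hHerm j i) (hU i) (fiber i), ?_⟩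
  · calc ∑ i, (fiber i).card = ∑ i, ∑ l, if (⟨i, l⟩ : Σ i, n' i) ∈ S then 1 else 0 := by
          simp [fiber, Finset.sum_boole]
      _ = ∑ t : Σ i, n' i, if t ∈ S then 1 else 0 :=
          (Fintype.sum_sigma fun t : Σ i, n' i => if t ∈ S then (1 : ℕ) else 0).symm
      _ = S.card := by simp
  · ext j
    rw [Fintype.linearCombination_apply, Finset.sum_apply, Finset.sum_apply, Fintype.sum_sigma]
    refine Fintype.sum_congr _ _ fun i => ?_
    simp [fiber, Finset.sum_filter, Set.indicator_apply]

theorem jointKNumRangeR_blockDiagonal'_subset_convexHull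
    {Ablk : Fin m → ∀ i, Matrix (n' i) (n' i) ℂ} (hHerm : ∀ j i, (Ablk j i).IsHermitian) (k : ℕ) :
    jointKNumRangeR k (fun j => blockDiagonal' (Ablk j)) ⊆
      convexHull ℝ (sumJointKNumRange k Ablk) := by
  rintro p ⟨P, hH, hP, rfl, htr⟩
  set U : ∀ i, Matrix (n' i) (n' i) ℂ := fun i => (hH.submatrix (Sigma.mk i)).eigenvectorUnitary
  set L := Fintype.linearCombination ℝ (blockConjDiag Ablk U)
  have hp : p = L (blockEigenvalues hH) := by
    ext j
    rw [← Complex.ofReal_re (p j), htr j, trace_blockDiagonal'_mul, Complex.re_sum,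
      Fintype.linearCombination_apply, Finset.sum_apply, Fintype.sum_sigma]
    exact Fintype.sum_congr _ _ fun i => (hH.submatrix (Sigma.mk i)).re_trace_mul (Ablk j i)
  have hvert : L '' hypersimplexVertices P.rank ⊆ sumJointKNumRange P.rank Ablk := by
    rintro _ ⟨_, ⟨S, hS, rfl⟩, rfl⟩
    exact hS ▸ linearCombination_blockConjDiag_indicator_mem_sumJointKNumRange hHerm
      (fun i => (hH.submatrix (Sigma.mk i)).eigenvectorUnitary.2) S
  rw [hp]
  refine convexHull_mono hvert (L.image_convexHull _ ▸ Set.mem_image_of_mem L ?_)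
  exact hypersimplex_subset_convexHull _ (blockEigenvalues_mem_hypersimplex hH hP)

end BlockDiagonal

theorem stmt_14_general {r m : ℕ}
    (ns : Fin r → ℕ)
    (Ablk : Fin m → ∀ i : Fin r, Matrix (Fin (ns i)) (Fin (ns i)) ℂ)
    (hHerm : ∀ j i, (Ablk j i).IsHermitian)
    (A : Fin m → Matrix ((i : Fin r) × Fin (ns i)) ((i : Fin r) × Fin (ns i)) ℂ)
    (hA : ∀ j, A j = Matrix.blockDiagonal' (Ablk j))
    (k : ℕ)
    (W : Set (Fin m → ℝ))
    (hW : W = ⋃ κ ∈ { κ : Fin r → ℕ | ∑ i, κ i = k },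
      { p : Fin m → ℝ | ∃ q : Fin r → Fin m → ℝ,
        (∀ i, q i ∈ jointKNumRangeR (κ i) (fun j => Ablk j i)) ∧ p = ∑ i, q i }) :
    jointKNumRangeR k A ⊆ convexHull ℝ W ∧
      convexHull ℝ W = convexHull ℝ (jointKNumRangeR k A) := by
  obtain rfl : A = fun j => blockDiagonal' (Ablk j) := funext hA
  have hsub := jointKNumRangeR_blockDiagonal'_subset_convexHull hHerm k
  subst hW
  exact ⟨hsub, (convexHull_mono (sumJointKNumRange_subset_jointKNumRangeR k Ablk)).antisymm
    (convexHull_min hsub (convex_convexHull ℝ _))⟩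

theorem stmt_14 {r m : ℕ} (hr : 0 < r) (hm : 0 < m)
    (ns : Fin r → ℕ) (hns : ∀ i, 0 < ns i)
    (Ablk : Fin m → ∀ i : Fin r, Matrix (Fin (ns i)) (Fin (ns i)) ℂ)
    (hHerm : ∀ j i, (Ablk j i).IsHermitian)
    (A : Fin m → Matrix ((i : Fin r) × Fin (ns i)) ((i : Fin r) × Fin (ns i)) ℂ)
    (hA : ∀ j, A j = Matrix.blockDiagonal' (Ablk j))
    (k : ℕ) (hk1 : 1 ≤ k) (hk2 : k ≤ (∑ i, ns i) - 1)
    (W : Set (Fin m → ℝ))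
    (hW : W = ⋃ κ ∈ { κ : Fin r → ℕ | ∑ i, κ i = k },
      { p : Fin m → ℝ | ∃ q : Fin r → Fin m → ℝ,
        (∀ i, q i ∈ jointKNumRangeR (κ i) (fun j => Ablk j i)) ∧ p = ∑ i, q i }) :
    jointKNumRangeR k A ⊆ convexHull ℝ W ∧
      convexHull ℝ W = convexHull ℝ (jointKNumRangeR k A) :=
  stmt_14_general ns Ablk hHerm A hA k W hW
end
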